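/- arXiv:1809.07379 — 11 statements merged into one kernel-verified Lean document; each statement's English description precedes it below -/
import Mathlib

section
/- Let k ≥ 1 and n ≥ 2 be integers and let L be a k×k integer matrix all of whose row sums and column sums are zero. Let L̃ₙ be the (k+n−1)×(k+n−1) integer block matrix [[nIₖ + L, −J], [−J, (n+k)Iₙ₋₁ − J]], where each J denotes a block of all 1s of the appropriate dimensions. Then there exist unimodular integer matrices U and V of size (k+n−1) such that U · L̃ₙ · V equals the block-diagonal matrix with diagonal blocks nIₖ + L + Jₖ, (n+k)Iₙ₋₂, and the 1×1 block (1), where Jₖ is the k×k all-ones matrix. -/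
/-!
Let `s` be the last cone vertex kept in `L̃ₙ`. Every row of `L̃ₙ` sums to `1` (this is where the
zero row sums of `L` enter), so adding all other columns to column `s` turns it into the all-ones
column. Subtracting row `s`, which is `-1` off the diagonal, from every other row then clears
column `s` except at `(s, s)` and adds `1` to every entry outside row and column `s`; a final
column operation clears row `s`. What is left is `L̃ₙ + J` away from `s` and `1` at `s`, i.e. the blocks
`nIₖ + L + Jₖ` and `(n+k)Iₙ₋₂`. All three operations are `1 + xyᵀ` with `y ⬝ x = 0`, hence
unimodular.
-/

open Matrix

namespace Matrix

variable {R : Type*} [CommRing R] {ι : Type*} [Fintype ι] [DecidableEq ι]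

theorem det_one_add_vecMulVec (a b : ι → R) : (1 + vecMulVec a b).det = 1 + b ⬝ᵥ a := by
  rw [vecMulVec_eq Unit, det_one_add_replicateCol_mul_replicateRow]

theorem exists_isUnit_det_mul_mul_eq_updateCol_updateRow (M : Matrix ι ι R) (s : ι)
    (hrow : M *ᵥ 1 = 1) (hs : ∀ c ≠ s, M s c = -1) :
    ∃ U V : Matrix ι ι R, IsUnit U.det ∧ IsUnit V.det ∧
      U * M * V =
        ((M + of fun _ _ => 1).updateRow s (Pi.single s 1)).updateCol s (Pi.single s 1) := by
  set e : ι → R := Pi.single s 1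
  set u : ι → R := 1 - e
  have he : e ⬝ᵥ u = 0 := by simp [e, u, single_dotProduct]
  have hcol : M * (1 + vecMulVec u e) = M.updateCol s 1 := by
    ext r c
    rw [Matrix.mul_add, mul_one, mul_vecMulVec, mulVec_sub, hrow, mulVec_single_one]
    by_cases hc : c = s
    · subst hc; simp [e, vecMulVec_apply]
    · simp [e, vecMulVec_apply, hc]
  refine ⟨1 - vecMulVec u e, (1 + vecMulVec u e) * (1 + vecMulVec e u), ?_, ?_, ?_⟩
  · rw [sub_eq_add_neg, ← neg_vecMulVec, det_one_add_vecMulVec, dotProduct_neg, he]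
    simp
  · rw [det_mul, det_one_add_vecMulVec, det_one_add_vecMulVec, he, dotProduct_comm, he]
    simp
  · rw [← Matrix.mul_assoc, Matrix.mul_assoc _ M, hcol]
    ext r c
    simp only [Matrix.sub_mul, Matrix.mul_add, one_mul, mul_one, vecMulVec_mul, mul_vecMulVec]
    by_cases hr : r = s <;> by_cases hc : c = s <;>
      simp [e, u, vecMulVec_apply, updateRow_apply, hr, hc, hs]

end Matrix

def coneReducedLaplacian {k : ℕ} (n : ℕ) (L : Matrix (Fin k) (Fin k) ℤ) :
    Matrix (Fin k ⊕ Fin (n - 1)) (Fin k ⊕ Fin (n - 1)) ℤ :=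
  fromBlocks ((n : ℤ) • 1 + L) (-(of fun _ _ => 1))
    (-(of fun _ _ => 1)) (((n + k : ℕ) : ℤ) • 1 - of fun _ _ => 1)

section coneReducedLaplacian

variable {k n : ℕ} (L : Matrix (Fin k) (Fin k) ℤ)

theorem coneReducedLaplacian_mulVec_one (hn : 1 ≤ n) (hrow : ∀ i, ∑ j, L i j = 0) :
    coneReducedLaplacian n L *ᵥ 1 = 1 := by
  ext (i | a) <;>
    simp [coneReducedLaplacian, mulVec, dotProduct, Fintype.sum_sum_type, Finset.sum_add_distrib,
      Matrix.natCast_apply, hrow, Nat.cast_sub hn]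

theorem coneReducedLaplacian_inr_apply_of_ne (a : Fin (n - 1)) {c : Fin k ⊕ Fin (n - 1)}
    (hc : c ≠ .inr a) : coneReducedLaplacian n L (.inr a) c = -1 := by
  rcases c with j | b
  · simp [coneReducedLaplacian]
  · simp [coneReducedLaplacian, Matrix.natCast_apply, Ne.symm (Sum.inr_injective.ne_iff.mp hc)]

theorem coneReducedLaplacian_add_one_updateRow_updateCol {β : Type*} [DecidableEq β]
    (τ : Fin (n - 1) ≃ β ⊕ Fin 1) :
    let s : Fin k ⊕ Fin (n - 1) := .inr (τ.symm (.inr 0))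
    ((coneReducedLaplacian n L + of fun _ _ => 1).updateRow s (Pi.single s 1)).updateCol s
        (Pi.single s 1) =
      (fromBlocks ((n : ℤ) • 1 + L + of fun _ _ => 1) 0
        0 (fromBlocks (((n + k : ℕ) : ℤ) • 1) 0 0 (1 : Matrix (Fin 1) (Fin 1) ℤ))).submatrix
        (Equiv.sumCongr (Equiv.refl (Fin k)) τ) (Equiv.sumCongr (Equiv.refl (Fin k)) τ) := by
  intro s
  set σ := Equiv.sumCongr (Equiv.refl (Fin k)) τ
  rw [← submatrix_id_id (updateCol _ _ _), ← σ.symm_comp_self, ← submatrix_submatrix]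
  congr 1
  ext (i | b | o) (j | b' | o') <;>
    simp [σ, s, coneReducedLaplacian, Matrix.natCast_apply, Fin.fin_one_eq_zero, updateRow_apply,
      one_apply]

end coneReducedLaplacian

/-- Let `k ≥ 1`, `n ≥ 2`, and let `L` be a `k × k` integer matrix all of whose
row sums and column sums are zero.  Let `L̃ₙ` be the `(k+n-1) × (k+n-1)` block matrix
`[[nIₖ + L, -J], [-J, (n+k)Iₙ₋₁ - J]]`.  Then there exist unimodular integer matrices `U`, `V`
with `U * L̃ₙ * V` equal to the block-diagonal matrix with diagonal blocks `nIₖ + L + Jₖ`,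
`(n+k)Iₙ₋₂` and the `1 × 1` block `(1)`. -/
theorem cone_reduced_laplacian_diagonalization
    (k n : ℕ) (hn : 2 ≤ n)
    (L : Matrix (Fin k) (Fin k) ℤ)
    (hrow : ∀ i, ∑ j, L i j = 0)
    (Ln : Matrix (Fin k ⊕ Fin (n - 1)) (Fin k ⊕ Fin (n - 1)) ℤ)
    (hLn : Ln = Matrix.fromBlocks
      ((n : ℤ) • 1 + L) (-(Matrix.of fun _ _ => 1))
      (-(Matrix.of fun _ _ => 1)) (((n + k : ℕ) : ℤ) • 1 - Matrix.of fun _ _ => 1)) :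
    ∃ U V : Matrix (Fin k ⊕ Fin (n - 1)) (Fin k ⊕ Fin (n - 1)) ℤ,
      IsUnit U.det ∧ IsUnit V.det ∧
      U * Ln * V =
        Matrix.submatrix
          (Matrix.fromBlocks
            ((n : ℤ) • 1 + L + Matrix.of fun _ _ => 1) 0
            0 (Matrix.fromBlocks (((n + k : ℕ) : ℤ) • 1) 0
                0 (1 : Matrix (Fin 1) (Fin 1) ℤ)))
          (Equiv.sumCongr (Equiv.refl (Fin k))
            ((finCongr (by omega : n - 1 = (n - 2) + 1)).trans finSumFinEquiv.symm))
          (Equiv.sumCongr (Equiv.refl (Fin k))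
            ((finCongr (by omega : n - 1 = (n - 2) + 1)).trans finSumFinEquiv.symm)) := by
  let τ : Fin (n - 1) ≃ Fin (n - 2) ⊕ Fin 1 :=
    (finCongr (by omega : n - 1 = (n - 2) + 1)).trans finSumFinEquiv.symm
  obtain ⟨U, V, hU, hV, hUV⟩ := exists_isUnit_det_mul_mul_eq_updateCol_updateRow
    (coneReducedLaplacian n L) (.inr (τ.symm (.inr 0)))
    (coneReducedLaplacian_mulVec_one L (by omega) hrow)
    (fun _ hc => coneReducedLaplacian_inr_apply_of_ne L _ hc)
  subst hLn
  exact ⟨U, V, hU, hV, hUV.trans (coneReducedLaplacian_add_one_updateRow_updateCol L τ)⟩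
end

section
/- Let k ≥ 1 and n ≥ 2 be integers and let L be a k×k integer matrix all of whose row sums and column sums are zero. Let L̃ₙ be the (k+n−1)×(k+n−1) integer block matrix [[nIₖ + L, −J], [−J, (n+k)Iₙ₋₁ − J]], where each J denotes a block of all 1s. Then the cokernel ℤ^{k+n−1}/L̃ₙ(ℤ^{k+n−1}) is isomorphic as an abelian group to (ℤ/(n+k)ℤ)^{n−2} ⊕ (ℤᵏ/(nIₖ + L + Jₖ)(ℤᵏ)), where Jₖ is the k×k all-ones matrix. -/
/-!
Every column of the reduced Laplacian `L̃ₙ` sums to `1`, so replacing a row of its `Kₙ`-block by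
the sum of all rows produces the all-ones row, which serves as a pivot. Unimodular row and
column operations then bring `L̃ₙ` to the block diagonal form
`diag(nIₖ + L + Jₖ, 1, (n+k)Iₙ₋₂)` without changing the cokernel.
-/

open Matrix

noncomputable def LinearEquiv.piSubtypeNeOfSubsingleton {R ι : Type*} [Semiring R]
    [DecidableEq ι] {M : ι → Type*} [∀ i, AddCommMonoid (M i)] [∀ i, Module R (M i)]
    (ℓ : ι) [Subsingleton (M ℓ)] : (Π i, M i) ≃ₗ[R] Π i : {i // i ≠ ℓ}, M i where
  toFun x i := x i
  invFun y i := if h : i = ℓ then 0 else y ⟨i, h⟩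
  map_add' _ _ := rfl
  map_smul' _ _ := rfl
  left_inv x := funext fun i => by
    by_cases h : i = ℓ
    · subst h; exact Subsingleton.elim _ _
    · simp [h]
  right_inv y := funext fun i => by simp [i.2]

namespace Matrix

variable {R : Type*} [CommRing R]

abbrev Coker {m n : Type*} [Fintype n] (A : Matrix m n R) : Type _ :=
  (m → R) ⧸ LinearMap.range A.mulVecLin

section Units

variable {m n : Type*} [Fintype m] [DecidableEq m] [Fintype n] [DecidableEq n]

noncomputable def cokerUnitsMulMulEquiv (U : (Matrix m m R)ˣ) (A : Matrix m n R)
    (V : (Matrix n n R)ˣ) : Coker (U.val * A * V.val) ≃ₗ[R] Coker A :=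
  Submodule.Quotient.equiv _ _ ((U⁻¹).val.toLinearEquiv' (Units.invertible _)) <| by
    rw [toLinearEquiv'_apply, ← LinearMap.range_comp, toLin'_apply', ← mulVecLin_mul,
      ← Matrix.mul_assoc, ← Matrix.mul_assoc, Units.inv_mul, Matrix.one_mul, mulVecLin_mul,
      LinearMap.range_comp_of_range_eq_top _
        (LinearMap.range_eq_top.2 (mulVec_surjective_iff_isUnit.2 V.isUnit))]

def unitOneAddVecMulVec (x y : n → R) (h : y ⬝ᵥ x = 0) : (Matrix n n R)ˣ where
  val := 1 + vecMulVec x y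
  inv := 1 - vecMulVec x y
  val_inv := by simp [mul_sub, add_mul, vecMulVec_mul_vecMulVec, h]
  inv_val := by simp [sub_mul, mul_add, vecMulVec_mul_vecMulVec, h]

end Units

section Pivot

variable {ι : Type*} [Fintype ι] [DecidableEq ι]

def pivotAt (A : Matrix ι ι R) (ℓ : ι) : Matrix ι ι R :=
  (A - vecMulVec (fun r => A r ℓ) 1).updateRow ℓ (Pi.single ℓ 1)

theorem exists_units_mul_mul_eq_pivotAt (A : Matrix ι ι R) (ℓ : ι)
    (hA : ∀ c, ∑ r, A r c = 1) :
    ∃ U V : (Matrix ι ι R)ˣ, U.val * A * V.val = A.pivotAt ℓ := by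
  -- Add all rows to row `ℓ`, which becomes the all-ones row; subtract column `ℓ` from every
  -- column, which turns row `ℓ` into `eₗ`; then clear column `ℓ` with row `ℓ`.
  set e : ι → R := Pi.single ℓ 1
  set f : ι → R := 1 - e
  set g : ι → R := Function.update (fun r => A r ℓ) ℓ 0
  have hfe : f ⬝ᵥ e = 0 := by simp [e, f]
  have heg : e ⬝ᵥ g = 0 := by simp [e, g]
  refine ⟨(unitOneAddVecMulVec g e heg)⁻¹ * unitOneAddVecMulVec e f hfe,
    (unitOneAddVecMulVec e f hfe)⁻¹, ?_⟩
  have h1 : (1 + vecMulVec e f) * A = A.updateRow ℓ 1 := by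
    ext r c
    rw [add_mul, Matrix.one_mul, vecMulVec_mul]
    by_cases hr : r = ℓ
    · subst hr
      simp [vecMulVec_apply, e, f, vecMul, dotProduct, sub_mul, Finset.sum_sub_distrib, hA,
        Pi.single_apply]
    · simp [vecMulVec_apply, hr, e]
  have h2 : A.updateRow ℓ 1 * (1 - vecMulVec e f) =
      (A - vecMulVec (fun r => A r ℓ) f).updateRow ℓ e := by
    ext r c
    rw [mul_sub, Matrix.mul_one, mul_vecMulVec]
    by_cases hr : r = ℓ
    · subst hr
      simp [vecMulVec_apply, e, f]
    · simp [vecMulVec_apply, hr, e]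
  have h3 : (1 - vecMulVec g e) * (A - vecMulVec (fun r => A r ℓ) f).updateRow ℓ e =
      A.pivotAt ℓ := by
    ext r c
    rw [sub_mul, Matrix.one_mul, vecMulVec_mul]
    by_cases hr : r = ℓ
    · subst hr
      simp [vecMulVec_apply, pivotAt, g, e]
    · by_cases hc : c = ℓ
      · subst hc; simp [vecMulVec_apply, pivotAt, hr, g, e, f]
      · simp [vecMulVec_apply, pivotAt, hr, hc, g, e, f]
  simp only [Units.val_mul, unitOneAddVecMulVec, Units.inv_mk]
  rw [Matrix.mul_assoc _ _ A, h1, Matrix.mul_assoc, h2, h3]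

end Pivot

section Blocks

variable {m n m' n' : Type*} [Fintype n] [Fintype n']

theorem range_fromBlocks_mulVecLin (A : Matrix m n R) (D : Matrix m' n' R) :
    LinearMap.range (fromBlocks A 0 0 D).mulVecLin =
      LinearMap.ker (((LinearMap.range A.mulVecLin).mkQ ∘ₗ LinearMap.funLeft R R Sum.inl).prod
        ((LinearMap.range D.mulVecLin).mkQ ∘ₗ LinearMap.funLeft R R Sum.inr)) := by
  ext x
  simp only [LinearMap.mem_range, LinearMap.mem_ker, mulVecLin_apply, LinearMap.prod_apply,
    Function.prod, LinearMap.comp_apply, Submodule.mkQ_apply, Prod.mk_eq_zero,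
    Submodule.Quotient.mk_eq_zero]
  constructor
  · rintro ⟨y, rfl⟩
    exact ⟨⟨y ∘ Sum.inl, by ext; simp [fromBlocks_mulVec]⟩,
      ⟨y ∘ Sum.inr, by ext; simp [fromBlocks_mulVec]⟩⟩
  · rintro ⟨⟨u, hu⟩, ⟨v, hv⟩⟩
    refine ⟨Sum.elim u v, ?_⟩
    ext (i | i) <;> simp [fromBlocks_mulVec, hu, hv]

noncomputable def cokerFromBlocksEquiv (A : Matrix m n R) (D : Matrix m' n' R) :
    Coker (fromBlocks A 0 0 D) ≃ₗ[R] Coker A × Coker D :=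
  Submodule.quotEquivOfEq _ _ (range_fromBlocks_mulVecLin A D) ≪≫ₗ
    LinearMap.quotKerEquivOfSurjective _ fun ⟨p, q⟩ => by
      obtain ⟨u, rfl⟩ := Submodule.mkQ_surjective _ p
      obtain ⟨v, rfl⟩ := Submodule.mkQ_surjective _ q
      exact ⟨Sum.elim u v, rfl⟩

end Blocks

section Diagonal

variable {ι : Type*} [Fintype ι] [DecidableEq ι]

theorem range_diagonal_mulVecLin (d : ι → R) :
    LinearMap.range (diagonal d).mulVecLin = Submodule.pi Set.univ fun i => Ideal.span {d i} := by
  ext x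
  simp only [LinearMap.mem_range, mulVecLin_apply, Submodule.mem_pi, Set.mem_univ, true_implies,
    Ideal.mem_span_singleton', funext_iff, mulVec_diagonal]
  constructor
  · rintro ⟨y, hy⟩ i
    exact ⟨y i, by rw [← hy, mul_comm]⟩
  · intro h
    choose y hy using h
    exact ⟨y, fun i => by rw [← hy, mul_comm]⟩

noncomputable def cokerDiagonalEquiv (d : ι → R) :
    Coker (diagonal d) ≃ₗ[R] Π i, R ⧸ Ideal.span {d i} :=
  Submodule.quotEquivOfEq _ _ (range_diagonal_mulVecLin d) ≪≫ₗ Submodule.quotientPi _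

noncomputable def cokerDiagonalUpdateOneEquiv (c : R) (z : ι) :
    Coker (diagonal (Function.update (fun _ => c) z 1)) ≃ₗ[R]
      ({i // i ≠ z} → R ⧸ Ideal.span {c}) :=
  haveI : Subsingleton (R ⧸ Ideal.span {Function.update (fun _ => c) z 1 z}) := by
    rw [Function.update_self, Ideal.span_singleton_one]
    infer_instance
  cokerDiagonalEquiv _ ≪≫ₗ LinearEquiv.piSubtypeNeOfSubsingleton z ≪≫ₗ
    LinearEquiv.piCongrRight fun i =>
      Submodule.quotEquivOfEq _ _ (by rw [Function.update_of_ne i.2])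

end Diagonal

section Cone

variable {κ μ : Type*}

theorem sum_fromBlocks_neg_ones_apply_eq_one [Fintype κ] [Fintype μ] [DecidableEq μ]
    (A : Matrix κ κ R) (c : R) (hA : ∀ b, ∑ a, A a b = 1 + Fintype.card μ)
    (hc : c = 1 + Fintype.card κ + Fintype.card μ) (col : κ ⊕ μ) :
    ∑ r, fromBlocks A (-of fun _ _ => 1) (-of fun _ _ => 1)
      (c • (1 : Matrix μ μ R) - of fun _ _ => 1) r col = 1 := by
  rcases col with b | j
  · simp [Fintype.sum_sum_type, hA]
  · simp [Fintype.sum_sum_type, one_apply, Finset.sum_sub_distrib, hc]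

theorem pivotAt_fromBlocks_neg_ones [DecidableEq κ] [DecidableEq μ] (A : Matrix κ κ R) (c : R)
    (z : μ) :
    (fromBlocks A (-of fun _ _ => 1) (-of fun _ _ => 1)
        (c • (1 : Matrix μ μ R) - of fun _ _ => 1)).pivotAt (Sum.inr z) =
      fromBlocks (A + of fun _ _ => 1) 0 0 (diagonal (Function.update (fun _ => c) z 1)) := by
  ext (a | i) (b | j)
  · simp [pivotAt, sub_eq_add_neg]
  · simp [pivotAt]
  · by_cases hi : i = z <;> simp [pivotAt, updateRow_apply, hi]
  · by_cases hi : i = z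
    · subst hi; simp [pivotAt, Pi.single_apply, diagonal_apply, eq_comm]
    · simp [pivotAt, updateRow_apply, hi, one_apply, diagonal_apply]

end Cone

end Matrix

theorem cone_critical_group_structure_general
    (k n : ℕ) (hn : 2 ≤ n)
    (L : Matrix (Fin k) (Fin k) ℤ)
    (hcol : ∀ j, ∑ i, L i j = 0)
    (Ln : Matrix (Fin k ⊕ Fin (n - 1)) (Fin k ⊕ Fin (n - 1)) ℤ)
    (hLn : Ln = Matrix.fromBlocks
      ((n : ℤ) • 1 + L) (-(Matrix.of fun _ _ => 1))
      (-(Matrix.of fun _ _ => 1)) (((n + k : ℕ) : ℤ) • 1 - Matrix.of fun _ _ => 1)) :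
    Nonempty (
      ((Fin k ⊕ Fin (n - 1) → ℤ) ⧸ LinearMap.range Ln.mulVecLin)
        ≃+
      (Fin (n - 2) → ZMod (n + k)) ×
        ((Fin k → ℤ) ⧸
          LinearMap.range ((n : ℤ) • 1 + L + Matrix.of fun _ _ => 1).mulVecLin)) := by
  subst hLn
  have hA : ∀ b, ∑ a, ((n : ℤ) • 1 + L) a b = 1 + Fintype.card (Fin (n - 1)) := fun b => by
    simp only [Matrix.add_apply, Matrix.smul_apply, one_apply, Finset.sum_add_distrib, hcol,
      smul_eq_mul, mul_ite, mul_one, mul_zero, Finset.sum_ite_eq', Finset.mem_univ, if_true,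
      add_zero, Fintype.card_fin]
    omega
  have hc : ((n + k : ℕ) : ℤ) = 1 + Fintype.card (Fin k) + Fintype.card (Fin (n - 1)) := by
    simp only [Fintype.card_fin]
    omega
  set z : Fin (n - 1) := ⟨0, by omega⟩
  obtain ⟨U, V, hUV⟩ := exists_units_mul_mul_eq_pivotAt _ (Sum.inr z)
    (sum_fromBlocks_neg_ones_apply_eq_one _ _ hA hc)
  rw [pivotAt_fromBlocks_neg_ones] at hUV
  have hcard : Fintype.card {i // i ≠ z} = n - 2 := by
    simp only [ne_eq, Fintype.card_subtype_compl, Fintype.card_fin, Fintype.card_unique]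
    omega
  let e := (cokerUnitsMulMulEquiv U _ V).symm ≪≫ₗ
    Submodule.quotEquivOfEq _ _ (by rw [hUV]) ≪≫ₗ
    cokerFromBlocksEquiv _ _ ≪≫ₗ LinearEquiv.prodComm ℤ _ _ ≪≫ₗ
    LinearEquiv.prodCongr (cokerDiagonalUpdateOneEquiv _ z ≪≫ₗ
      LinearEquiv.funCongrLeft ℤ _ (Fintype.equivFinOfCardEq hcard).symm) (LinearEquiv.refl ℤ _)
  exact ⟨e.toAddEquiv.trans <| AddEquiv.prodCongr
    (AddEquiv.piCongrRight fun _ => (Int.quotientSpanNatEquivZMod (n + k)).toAddEquiv)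
    (AddEquiv.refl _)⟩

/-- Theorem 1(1). The cokernel of the reduced Laplacian of the `n`-th cone
is isomorphic to `(ℤ/(n+k)ℤ)^{n-2} ⊕ cok(nIₖ + L + Jₖ)`. -/
theorem cone_critical_group_structure
    (k n : ℕ) (hk : 1 ≤ k) (hn : 2 ≤ n)
    (L : Matrix (Fin k) (Fin k) ℤ)
    (hrow : ∀ i, ∑ j, L i j = 0) (hcol : ∀ j, ∑ i, L i j = 0)
    (Ln : Matrix (Fin k ⊕ Fin (n - 1)) (Fin k ⊕ Fin (n - 1)) ℤ)
    (hLn : Ln = Matrix.fromBlocks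
      ((n : ℤ) • 1 + L) (-(Matrix.of fun _ _ => 1))
      (-(Matrix.of fun _ _ => 1)) (((n + k : ℕ) : ℤ) • 1 - Matrix.of fun _ _ => 1)) :
    Nonempty (
      ((Fin k ⊕ Fin (n - 1) → ℤ) ⧸ LinearMap.range Ln.mulVecLin)
        ≃+
      (Fin (n - 2) → ZMod (n + k)) ×
        ((Fin k → ℤ) ⧸
          LinearMap.range ((n : ℤ) • 1 + L + Matrix.of fun _ _ => 1).mulVecLin)) :=
  cone_critical_group_structure_general k n hn L hcol Ln hLn
end

section
/- Let k ≥ 1 and n ≥ 1 be integers, let L be a k×k integer matrix all of whose row sums and column sums are zero, and set A = nIₖ + L + Jₖ, where Jₖ is the k×k all-ones matrix. Assume det(A) ≠ 0. Then the cokernel ℤᵏ/A(ℤᵏ) has a subgroup isomorphic to ℤ/(n+k)ℤ; in fact, the image of the all-ones vector in ℤᵏ/A(ℤᵏ) generates a cyclic subgroup of order n+k. -/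
/-- Theorem 1(2). The cokernel of `A = nIₖ + L + Jₖ` has a subgroup
isomorphic to `ℤ/(n+k)ℤ`; in fact the class of the all-ones vector has order `n + k`. -/
theorem coker_has_cyclic_subgroup
    (k n : ℕ) (hk : 1 ≤ k) (hn : 1 ≤ n)
    (L : Matrix (Fin k) (Fin k) ℤ)
    (hrow : ∀ i, ∑ j, L i j = 0) (hcol : ∀ j, ∑ i, L i j = 0)
    (A : Matrix (Fin k) (Fin k) ℤ)
    (hA : A = (n : ℤ) • 1 + L + Matrix.of fun _ _ => 1)
    (hdet : A.det ≠ 0) :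
    addOrderOf
      ((Submodule.Quotient.mk (fun _ => (1 : ℤ)) :
        (Fin k → ℤ) ⧸ LinearMap.range A.mulVecLin)) = n + k ∧
    ∃ H : AddSubgroup ((Fin k → ℤ) ⧸ LinearMap.range A.mulVecLin),
      Nonempty (H ≃+ ZMod (n + k)) := by
  haveI : NeZero k := ⟨by omega⟩
  set v : Fin k → ℤ := fun _ => (1 : ℤ) with hv
  set q : (Fin k → ℤ) ⧸ LinearMap.range A.mulVecLin := Submodule.Quotient.mk v with hq
  -- A *ᵥ 𝟙 = (n+k) • 𝟙
  have hAv : A.mulVec v = ((n : ℤ) + k) • v := by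
    funext i
    simp only [Matrix.mulVec, dotProduct, hv, mul_one, hA]
    simp only [Matrix.add_apply, Matrix.smul_apply, Matrix.of_apply, Finset.sum_add_distrib,
      hrow i, Matrix.one_apply, smul_eq_mul, mul_ite, mul_one, mul_zero]
    simp [Finset.sum_ite_eq]
  -- injectivity of mulVec
  have hinj : Function.Injective A.mulVec := by
    intro u w h
    have h2 := congrArg (A.adjugate.mulVec) h
    rw [Matrix.mulVec_mulVec, Matrix.mulVec_mulVec, Matrix.adjugate_mul,
      Matrix.smul_mulVec, Matrix.smul_mulVec, Matrix.one_mulVec,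
      Matrix.one_mulVec] at h2
    funext i
    have := congrFun h2 i
    simp only [Pi.smul_apply, smul_eq_mul] at this
    exact mul_left_cancel₀ hdet this
  -- characterization of multiples of q that vanish
  have key : ∀ m : ℕ, m • q = 0 → (n + k) ∣ m := by
    intro m hm
    rw [hq, ← Submodule.Quotient.mk_smul, Submodule.Quotient.mk_eq_zero] at hm
    obtain ⟨x, hx⟩ := hm
    have hx' : A.mulVec x = (m : ℤ) • v := by
      rw [Matrix.mulVecLin_apply] at hx
      rw [hx]; ext i; simp
    have h1 : A.mulVec (((n : ℤ) + k) • x) = A.mulVec ((m : ℤ) • v) := by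
      rw [Matrix.mulVec_smul, Matrix.mulVec_smul, hx', hAv, smul_comm]
    have h2 := hinj h1
    have h3 := congrFun h2 ⟨0, by omega⟩
    simp only [Pi.smul_apply, smul_eq_mul, hv, mul_one] at h3
    have : ((n : ℤ) + k) ∣ (m : ℤ) := ⟨x ⟨0, by omega⟩, h3.symm⟩
    have := Int.natCast_dvd_natCast.mp (by push_cast; exact this)
    exact this
  -- (n+k) • q = 0
  have hNq : (n + k) • q = 0 := by
    rw [hq, ← Submodule.Quotient.mk_smul, Submodule.Quotient.mk_eq_zero]
    exact ⟨v, by rw [Matrix.mulVecLin_apply, hAv]; push_cast; rfl⟩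
  have hord : addOrderOf q = n + k := by
    refine Nat.dvd_antisymm (addOrderOf_dvd_of_nsmul_eq_zero hNq) (key _ (addOrderOf_nsmul_eq_zero q))
  refine ⟨hord, ⟨AddSubgroup.zmultiples q, ⟨?_⟩⟩⟩
  have hcard : Nat.card (AddSubgroup.zmultiples q) = n + k := by
    rw [Nat.card_zmultiples, hord]
  haveI : IsAddCyclic (AddSubgroup.zmultiples q) := by
    refine ⟨⟨q, AddSubgroup.mem_zmultiples q⟩, ?_⟩
    rintro ⟨x, m, rfl⟩
    exact ⟨m, by ext; simp⟩
  exact hcard ▸ (zmodAddCyclicAddEquiv ‹_›).symm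
end

section
/- Let k ≥ 1 and n ≥ 1 be integers, let L be a k×k integer matrix all of whose row sums and column sums are zero, and set A = nIₖ + L + Jₖ, where Jₖ is the k×k all-ones matrix. Assume det(A) ≠ 0. If v ∈ ℤᵏ and ℓ ∈ ℤ satisfy A·v = ℓ·𝟙 (where 𝟙 is the all-ones vector), then (n+k) divides ℓ and v is a constant vector, namely v = (ℓ/(n+k))·𝟙. -/
/-- If `A = nIₖ + L + Jₖ` has nonzero determinant and `A·v = ℓ·𝟙` for an
integer vector `v`, then `(n+k) ∣ ℓ` and `v` is the constant vector `(ℓ/(n+k))·𝟙`. -/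
theorem solution_of_allones_is_constant
    (k n : ℕ) (hk : 1 ≤ k) (hn : 1 ≤ n)
    (L : Matrix (Fin k) (Fin k) ℤ)
    (hrow : ∀ i, ∑ j, L i j = 0) (hcol : ∀ j, ∑ i, L i j = 0)
    (A : Matrix (Fin k) (Fin k) ℤ)
    (hA : A = (n : ℤ) • 1 + L + Matrix.of fun _ _ => 1)
    (hdet : A.det ≠ 0)
    (v : Fin k → ℤ) (ℓ : ℤ)
    (hv : A.mulVec v = fun _ => ℓ) :
    ((n + k : ℕ) : ℤ) ∣ ℓ ∧ v = fun _ => ℓ / ((n + k : ℕ) : ℤ) := by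
  have hone : A.mulVec (fun _ => 1) = fun _ => ((n + k : ℕ) : ℤ) := by
    funext i
    rw [hA, Matrix.add_mulVec, Matrix.add_mulVec, Matrix.smul_mulVec,
      Matrix.one_mulVec]
    simp [Matrix.mulVec, dotProduct, hrow i]
  -- A ((n+k) • v - ℓ • 𝟙) = 0
  have hker : A.mulVec (((n + k : ℕ) : ℤ) • v - ℓ • (fun _ => 1)) = 0 := by
    rw [Matrix.mulVec_sub, Matrix.mulVec_smul, Matrix.mulVec_smul, hv, hone]
    funext i
    simp [mul_comm]
  have hx : ((n + k : ℕ) : ℤ) • v - ℓ • (fun _ => 1) = 0 := by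
    have h := congrArg (Matrix.mulVec A.adjugate) hker
    rw [Matrix.mulVec_mulVec, Matrix.adjugate_mul, Matrix.mulVec_zero,
      Matrix.smul_mulVec, Matrix.one_mulVec] at h
    have := smul_eq_zero.mp h
    tauto
  have hnk : ((n + k : ℕ) : ℤ) ≠ 0 := by positivity
  have key : ∀ i, ((n + k : ℕ) : ℤ) * v i = ℓ := by
    intro i
    have := congrFun hx i
    simp at this
    push_cast at this ⊢
    linarith
  have i0 : Fin k := ⟨0, hk⟩
  constructor
  · exact ⟨v i0, (key i0).symm⟩
  · funext i
    rw [← key i, Int.mul_ediv_cancel_left _ hnk]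
end

section
/- Let k ≥ 1 and n ≥ 1 be integers and let L be a k×k integer matrix all of whose row sums and column sums are zero. Then n · det(nIₖ + L + Jₖ) = (n+k) · det(nIₖ + L), where Jₖ is the k×k all-ones matrix. -/
/-!
If every row of `A` sums to `c`, then `A *ᵥ 1 = c • 1`, and replacing a column `j` of `A` by the
sum of all its columns does not change the determinant; hence `det A = c * det A'`, where `A'` is
`A` with column `j` replaced by `1`. With `J` the all-ones matrix, `A + J` has row sums `c + k`,
so likewise `det (A + J) = (c + k) * det (A + J)'`. Finally `(A + J)'` arises from `A'` by adding
its column `j` to every other column, so `det (A + J)' = det A'`.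
-/

open Matrix

namespace Matrix

variable {n R : Type*} [Fintype n] [DecidableEq n] [CommRing R]

theorem det_updateCol_mulVec_one (A : Matrix n n R) (j : n) :
    (A.updateCol j (A *ᵥ 1)).det = A.det := by
  have hcols : A *ᵥ 1 = fun k => ∑ i, (1 : n → R) i • A k i := by
    ext k
    simp [mulVec, dotProduct]
  rw [hcols, det_updateCol_sum, Pi.one_apply, one_smul]

theorem det_eq_mul_det_updateCol_one {A : Matrix n n R} {c : R} (h : A *ᵥ 1 = c • 1) (j : n) :
    A.det = c * (A.updateCol j 1).det := by
  rw [← det_updateCol_mulVec_one A j, h, det_updateCol_smul]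

theorem det_add_vecMulVec_of_col_eq {U : Matrix n n R} {j : n} {w r : n → R} (hw : U.col j = w)
    (hr : r j = 0) : (U + vecMulVec w r).det = U.det := by
  have hfac : U + vecMulVec w r
      = U * (1 + replicateCol Unit (Pi.single j (1 : R)) * replicateRow Unit r) := by
    ext i l
    simp [← hw, Matrix.mul_apply, vecMulVec_apply, Pi.single_apply, one_apply, mul_add,
      Finset.sum_add_distrib]
  rw [hfac, det_mul, det_one_add_replicateCol_mul_replicateRow, dotProduct_single, hr]
  simp

omit [Fintype n] in
theorem updateCol_add_of_one (A : Matrix n n R) (j : n) :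
    (A + of fun _ _ => 1).updateCol j 1
      = A.updateCol j 1 + vecMulVec 1 (fun l => if l = j then 0 else 1) := by
  ext i l
  by_cases hl : l = j <;> simp [hl]

theorem mul_det_add_of_one {A : Matrix n n R} {c : R} (h : A *ᵥ 1 = c • 1) :
    c * (A + of fun _ _ => 1).det = (c + Fintype.card n) * A.det := by
  cases isEmpty_or_nonempty n with
  | inl _ => simp
  | inr hn =>
    obtain ⟨j⟩ := hn
    have hJ : (A + of fun _ _ => 1) *ᵥ 1 = (c + Fintype.card n) • (1 : n → R) := by
      rw [add_mulVec, h]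
      ext i
      simp [mulVec, dotProduct]
    have hcol : (A.updateCol j 1).col j = 1 := by
      ext i
      simp
    rw [det_eq_mul_det_updateCol_one hJ j, det_eq_mul_det_updateCol_one h j,
      updateCol_add_of_one, det_add_vecMulVec_of_col_eq hcol (by simp)]
    ring

end Matrix

theorem det_shift_allones_general
    (k n : ℕ)
    (L : Matrix (Fin k) (Fin k) ℤ)
    (hrow : ∀ i, ∑ j, L i j = 0) :
    (n : ℤ) * ((n : ℤ) • 1 + L + Matrix.of fun _ _ => 1).det
      = ((n + k : ℕ) : ℤ) * ((n : ℤ) • 1 + L).det := by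
  have hL : L *ᵥ 1 = 0 := by
    ext i
    simpa [mulVec, dotProduct] using hrow i
  have hsum : ((n : ℤ) • 1 + L) *ᵥ 1 = (n : ℤ) • 1 := by
    rw [add_mulVec, hL, smul_mulVec, one_mulVec, add_zero]
  rw [mul_det_add_of_one hsum, Fintype.card_fin, Nat.cast_add]

/-- For `L` with all row and column sums zero,
`n · det(nIₖ + L + Jₖ) = (n+k) · det(nIₖ + L)`. -/
theorem det_shift_allones
    (k n : ℕ) (hk : 1 ≤ k) (hn : 1 ≤ n)
    (L : Matrix (Fin k) (Fin k) ℤ)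
    (hrow : ∀ i, ∑ j, L i j = 0) (hcol : ∀ j, ∑ i, L i j = 0) :
    (n : ℤ) * ((n : ℤ) • 1 + L + Matrix.of fun _ _ => 1).det
      = ((n + k : ℕ) : ℤ) * ((n : ℤ) • 1 + L).det :=
  det_shift_allones_general k n L hrow
end

section
/- Let k ≥ 1 and n ≥ 1 be integers and let L be a k×k integer matrix all of whose column sums are zero. Let M = nIₖ + L, and for each index i let M⁽ⁱ⁾ denote the matrix obtained from M by replacing its i-th row with the all-ones row vector. Then for every i, det(M) = n · det(M⁽ⁱ⁾). -/
open Matrix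

theorem Matrix.det_eq_mul_det_updateRow_of_sum_rows_eq_smul {ι R : Type*} [Fintype ι]
    [DecidableEq ι] [CommRing R] (M : Matrix ι ι R) (i : ι) (c : R) (v : ι → R)
    (hsum : ∑ r, M r = c • v) :
    M.det = c * (M.updateRow i v).det := by
  have h := M.det_updateRow_sum i fun _ => 1
  simp only [one_smul, hsum] at h
  rw [← h, det_updateRow_smul]

theorem Matrix.sum_rows_smul_one_add_of_sum_col_eq_zero {ι R : Type*} [Fintype ι]
    [DecidableEq ι] [CommRing R] (c : R) (L : Matrix ι ι R) (hcol : ∀ j, ∑ i, L i j = 0) :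
    ∑ r, (c • 1 + L) r = c • fun _ => 1 := by
  ext j
  rw [Finset.sum_apply j Finset.univ fun r => (c • 1 + L) r]
  simp [Finset.sum_add_distrib, hcol, one_apply]

theorem det_eq_n_mul_det_updateRow_one_general
    (k n : ℕ)
    (L : Matrix (Fin k) (Fin k) ℤ)
    (hcol : ∀ j, ∑ i, L i j = 0)
    (i : Fin k) :
    ((n : ℤ) • 1 + L).det
      = (n : ℤ) * (((n : ℤ) • 1 + L).updateRow i fun _ => 1).det :=
  det_eq_mul_det_updateRow_of_sum_rows_eq_smul _ i _ _
    (sum_rows_smul_one_add_of_sum_col_eq_zero _ L hcol)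

/-- If the column sums of `L` vanish and `M = nIₖ + L`, then for every row
index `i`, `det M = n · det M⁽ⁱ⁾`, where `M⁽ⁱ⁾` replaces the `i`-th row of `M` by the
all-ones row. -/
theorem det_eq_n_mul_det_updateRow_one
    (k n : ℕ) (hk : 1 ≤ k) (hn : 1 ≤ n)
    (L : Matrix (Fin k) (Fin k) ℤ)
    (hcol : ∀ j, ∑ i, L i j = 0)
    (i : Fin k) :
    ((n : ℤ) • 1 + L).det
      = (n : ℤ) * (((n : ℤ) • 1 + L).updateRow i fun _ => 1).det :=
  det_eq_n_mul_det_updateRow_one_general k n L hcol i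
end

section
/- Let k ≥ 1 and n ≥ 2 be integers and let L be a k×k integer matrix all of whose row sums and column sums are zero. Let L̃ₙ be the (k+n−1)×(k+n−1) integer block matrix [[nIₖ + L, −J], [−J, (n+k)Iₙ₋₁ − J]] (each J a block of all 1s), and let p_L(x) = det(xIₖ − L) be the characteristic polynomial of L. Then n · |det(L̃ₙ)| = |p_L(−n)| · (n+k)^{n−1}. -/
/-!
Right multiplication by the block matrix `[[1, J], [0, 1 + J]]`, of determinant `1 + (n - 1) = n`,
turns `L̃ₙ` into the block lower-triangular matrix `[[nI + L, 0], [-J, (n + k)I]]`: the vanishing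
row sums of `L` give `(nI + L) J = n J`, which cancels against `-J (1 + J) = -n J`. Hence
`n · det L̃ₙ = det (nI + L) · (n + k)^(n-1)`, and `p_L(-n) = det (-nI - L) = ± det (nI + L)`.
-/

open Matrix

namespace Matrix

variable {ι κ R : Type*} [Fintype ι] [Fintype κ] [CommRing R]

theorem of_one_mul_of_one {l n : Type*} :
    (of fun _ _ => 1 : Matrix l κ R) * (of fun _ _ => 1 : Matrix κ n R) =
      (Fintype.card κ : R) • of fun _ _ => 1 := by
  ext
  simp [mul_apply]

theorem mul_of_one_of_row_sum_eq {n : Type*} {A : Matrix ι ι R} {s : R}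
    (hA : ∀ i, ∑ j, A i j = s) :
    A * (of fun _ _ => 1 : Matrix ι n R) = s • of fun _ _ => 1 := by
  ext
  simp [mul_apply, hA]

theorem det_one_add_of_one [DecidableEq κ] :
    (1 + of fun _ _ => 1 : Matrix κ κ R).det = 1 + Fintype.card κ := by
  have h : (of fun _ _ => 1 : Matrix κ κ R) =
      replicateCol Unit (fun _ : κ => (1 : R)) * replicateRow Unit (fun _ : κ => (1 : R)) := by
    ext
    simp [mul_apply]
  rw [h, det_one_add_replicateCol_mul_replicateRow]
  simp [dotProduct]

theorem fromBlocks_cone_mul [DecidableEq ι] [DecidableEq κ] {A : Matrix ι ι R} {n : R}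
    (hA : ∀ i, ∑ j, A i j = n) (hn : (Fintype.card κ : R) + 1 = n) :
    fromBlocks A (-of fun _ _ => 1) (-of fun _ _ => 1)
        ((n + Fintype.card ι) • 1 - of fun _ _ => 1) *
      fromBlocks 1 (of fun _ _ => 1) 0 (1 + of fun _ _ => 1) =
    fromBlocks A 0 (-of fun _ _ => 1) ((n + Fintype.card ι) • (1 : Matrix κ κ R)) := by
  rw [fromBlocks_multiply]
  congr 1
  · simp
  · rw [mul_of_one_of_row_sum_eq hA, Matrix.neg_mul, Matrix.mul_add, Matrix.mul_one,
      of_one_mul_of_one, ← hn]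
    module
  · simp
  · rw [Matrix.neg_mul, of_one_mul_of_one, Matrix.sub_mul, Matrix.mul_add, Matrix.mul_add,
      of_one_mul_of_one, ← hn]
    simp only [smul_mul, one_mul, mul_one]
    module

theorem det_fromBlocks_cone [DecidableEq ι] [DecidableEq κ] {A : Matrix ι ι R} {n : R}
    (hA : ∀ i, ∑ j, A i j = n) (hn : (Fintype.card κ : R) + 1 = n) :
    n * (fromBlocks A (-of fun _ _ => 1) (-of fun _ _ => 1)
        ((n + Fintype.card ι) • (1 : Matrix κ κ R) - of fun _ _ => 1)).det =
      A.det * (n + Fintype.card ι) ^ Fintype.card κ := by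
  have h := congrArg det (fromBlocks_cone_mul hA hn)
  rwa [det_mul, det_fromBlocks_zero₂₁, det_fromBlocks_zero₁₂, det_one_add_of_one, det_one,
    one_mul, add_comm 1, hn, det_smul, det_one, mul_one, mul_comm] at h

end Matrix

theorem order_of_cone_critical_group_general
    (k n : ℕ) (hn : 2 ≤ n)
    (L : Matrix (Fin k) (Fin k) ℤ)
    (hrow : ∀ i, ∑ j, L i j = 0)
    (Ln : Matrix (Fin k ⊕ Fin (n - 1)) (Fin k ⊕ Fin (n - 1)) ℤ)
    (hLn : Ln = Matrix.fromBlocks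
      ((n : ℤ) • 1 + L) (-(Matrix.of fun _ _ => 1))
      (-(Matrix.of fun _ _ => 1)) (((n + k : ℕ) : ℤ) • 1 - Matrix.of fun _ _ => 1)) :
    (n : ℤ) * |Ln.det| = |((-(n : ℤ)) • 1 - L).det| * ((n + k : ℕ) : ℤ) ^ (n - 1) := by
  have hsum : ∀ i, ∑ j, ((n : ℤ) • 1 + L) i j = n := by
    intro i
    simp only [Matrix.add_apply, Finset.sum_add_distrib, hrow, Matrix.smul_apply, Matrix.one_apply,
      smul_eq_mul, mul_ite, mul_one, mul_zero, Finset.sum_ite_eq, Finset.mem_univ, if_true,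
      add_zero]
  have hcard : (Fintype.card (Fin (n - 1)) : ℤ) + 1 = n := by
    rw [Fintype.card_fin]
    omega
  have hcone := det_fromBlocks_cone hsum hcard
  simp only [Fintype.card_fin, ← Nat.cast_add] at hcone
  have hneg : (-(n : ℤ)) • 1 - L = -((n : ℤ) • 1 + L) := by
    rw [neg_smul, neg_add, sub_eq_add_neg]
  rw [hneg, det_neg, abs_mul, abs_pow, abs_neg, abs_one, one_pow, one_mul, hLn]
  simpa only [abs_mul, abs_pow, Nat.abs_cast] using congrArg abs hcone

/-- Theorem 1(3), Corollary B of Brown.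
`n · |det L̃ₙ| = |p_L(-n)| · (n+k)^{n-1}`, where `p_L(x) = det(xIₖ - L)`. -/
theorem order_of_cone_critical_group
    (k n : ℕ) (hk : 1 ≤ k) (hn : 2 ≤ n)
    (L : Matrix (Fin k) (Fin k) ℤ)
    (hrow : ∀ i, ∑ j, L i j = 0) (hcol : ∀ j, ∑ i, L i j = 0)
    (Ln : Matrix (Fin k ⊕ Fin (n - 1)) (Fin k ⊕ Fin (n - 1)) ℤ)
    (hLn : Ln = Matrix.fromBlocks
      ((n : ℤ) • 1 + L) (-(Matrix.of fun _ _ => 1))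
      (-(Matrix.of fun _ _ => 1)) (((n + k : ℕ) : ℤ) • 1 - Matrix.of fun _ _ => 1)) :
    (n : ℤ) * |Ln.det| = |((-(n : ℤ)) • 1 - L).det| * ((n + k : ℕ) : ℤ) ^ (n - 1) :=
  order_of_cone_critical_group_general k n hn L hrow Ln hLn
end

section
/- Let k ≥ 1 and n ≥ 2 be integers and let L be a k×k integer matrix with all row sums and column sums zero, and suppose the block matrix L̃ₙ = [[nIₖ + L, −J], [−J, (n+k)Iₙ₋₁ − J]] has nonzero determinant. Let C = ℤ^{k+n−1}/L̃ₙ(ℤ^{k+n−1}) and let p_L(x) = det(xIₖ − L). Then C has a subgroup S isomorphic to (ℤ/(n+k)ℤ)^{n−1} such that the quotient C/S is a finite group of order |p_L(−n)|/n; equivalently, there is a short exact sequence 0 → (ℤ/(n+k)ℤ)^{n−1} → C → Hₙ → 0 with |Hₙ| = |p_L(−n)|/n. -/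
/-!
Write `A = n • 1 + L`, so that `A 1 = n • 1` and `1ᵀ A = n • 1ᵀ`. If `A u = 0` then `∑ u = 0`
and `(u, 0)` lies in the kernel of `L̃ₙ`, so `det A ≠ 0`; hence `A u ∈ ℤ • 1` forces `u` to be
constant. Consequently `(0, v)` lies in the image of `L̃ₙ` iff `n + k` divides every `v c`, and
the classes of the vectors `(0, v)` form `S ≅ (ℤ/(n+k))^(n-1)`. Projecting onto the first `k`
coordinates identifies `C / S` with `ℤᵏ / (A ℤᵏ + ℤ • 1)`; the class of `1` in `ℤᵏ / A ℤᵏ` has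
order exactly `n`, so `|C / S| = |det A| / n`, and `|det A| = |p_L(-n)|`.
-/

open Matrix

theorem Matrix.index_range_mulVecLin {ι : Type*} [Fintype ι] [DecidableEq ι] (A : Matrix ι ι ℤ)
    (hA : A.det ≠ 0) : (LinearMap.range A.mulVecLin).toAddSubgroup.index = A.det.natAbs := by
  have hinj : Function.Injective A.mulVecLin := by
    rw [← LinearMap.ker_eq_bot, Matrix.ker_mulVecLin_eq_bot_iff]
    exact fun v hv => by_contra fun h => hA (exists_mulVec_eq_zero_iff.mp ⟨v, h, hv⟩)
  let bRange := (Pi.basisFun ℤ ι).map (LinearEquiv.ofInjective _ hinj)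
  rw [AddSubgroup.index_eq_natAbs_det (Pi.basisFun ℤ ι) _ bRange, Module.Basis.det_apply]
  congr 2
  ext i j
  simp [bRange, Module.Basis.toMatrix_apply]

theorem AddSubgroup.index_eq_index_sup_zmultiples_mul_addOrderOf {G : Type*} [AddCommGroup G]
    (H : AddSubgroup G) (x : G) :
    H.index = (H ⊔ zmultiples x).index * addOrderOf (x : G ⧸ H) := by
  have hrel := relIndex_ker (zmultiples x) (QuotientAddGroup.mk' H)
  rw [QuotientAddGroup.ker_mk', AddMonoidHom.map_zmultiples, Nat.card_zmultiples] at hrel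
  rw [← H.relIndex_mul_index le_sup_left, mul_comm, relIndex_sup_left, hrel]
  rfl

theorem Matrix.smul_eq_smul_one_of_mulVec_eq_smul_one {ι R : Type*} [Fintype ι] [DecidableEq ι]
    [CommRing R] [IsDomain R] {A : Matrix ι ι R} (hA : A.det ≠ 0) {a c : R} {u : ι → R}
    (hA1 : A *ᵥ 1 = a • 1) (hu : A *ᵥ u = c • 1) : a • u = c • 1 := by
  have hker : A *ᵥ (a • u - c • 1) = 0 := by
    rw [mulVec_sub, mulVec_smul, mulVec_smul, hu, hA1, smul_smul, smul_smul, mul_comm, sub_self]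
  by_contra h
  exact hA (exists_mulVec_eq_zero_iff.mp ⟨_, sub_ne_zero.mpr h, hker⟩)

theorem Matrix.of_one_mulVec {α β R : Type*} [Fintype β] [NonAssocSemiring R] (v : β → R) :
    (of fun (_ : α) (_ : β) => (1 : R)) *ᵥ v = (∑ j, v j) • 1 := by
  ext
  simp [mulVec, dotProduct]

theorem nonempty_range_addEquiv_pi_zmod {ι G : Type*} [AddGroup G] (N : ℕ)
    (φ : (ι → ℤ) →+ G) (hφ : ∀ v, φ v = 0 ↔ ∀ i, (N : ℤ) ∣ v i) :
    Nonempty (φ.range ≃+ (ι → ZMod N)) := by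
  let ψ := (Int.castAddHom (ZMod N)).compLeft ι
  have hψ : Function.Surjective ψ := ZMod.intCast_surjective.comp_left
  have hker : φ.ker = ψ.ker := by
    ext v
    simp [hφ, ψ, funext_iff, ZMod.intCast_zmod_eq_zero_iff_dvd]
  exact ⟨(QuotientAddGroup.quotientKerEquivRange φ).symm.trans
    ((QuotientAddGroup.quotientAddEquivOfEq hker).trans
      (QuotientAddGroup.quotientKerEquivOfSurjective ψ hψ))⟩

/-- The reduced Laplacian `L̃ₙ` of the `n`-th iterated cone, for `m = n - 1`. -/
def coneLaplacian {k : ℕ} (n : ℕ) (L : Matrix (Fin k) (Fin k) ℤ) (m : ℕ) :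
    Matrix (Fin k ⊕ Fin m) (Fin k ⊕ Fin m) ℤ :=
  fromBlocks ((n : ℤ) • 1 + L) (-(of fun _ _ => 1)) (-(of fun _ _ => 1))
    (((n + k : ℕ) : ℤ) • 1 - of fun _ _ => 1)

def cokerInr {κ μ : Type*} [Fintype κ] [Fintype μ] (M : Matrix (κ ⊕ μ) (κ ⊕ μ) ℤ) :
    (μ → ℤ) →+ (κ ⊕ μ → ℤ) ⧸ LinearMap.range M.mulVecLin where
  toFun v := Submodule.Quotient.mk (Sum.elim 0 v)
  map_zero' := by rw [Sum.elim_zero_zero, Submodule.Quotient.mk_zero]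
  map_add' v w := by rw [← Submodule.Quotient.mk_add, ← Sum.elim_add_add, add_zero]

section Cone

variable {k m n : ℕ} {L : Matrix (Fin k) (Fin k) ℤ}

theorem coneLaplacian_mulVec_sumElim (x : Fin k → ℤ) (y : Fin m → ℤ) :
    coneLaplacian n L m *ᵥ Sum.elim x y =
      Sum.elim (((n : ℤ) • 1 + L) *ᵥ x - (∑ c, y c) • 1)
        (((n : ℤ) + k) • y - (∑ i, x i + ∑ c, y c) • 1) := by
  simp only [coneLaplacian, fromBlocks_mulVec, Sum.elim_comp_inl, Sum.elim_comp_inr, neg_mulVec,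
    sub_mulVec, smul_mulVec, one_mulVec, of_one_mulVec]
  congr 1
  push_cast
  module

theorem det_ne_zero_of_det_coneLaplacian_ne_zero (hn : n ≠ 0) (h1L : 1 ᵥ* L = 0)
    (hdet : (coneLaplacian n L m).det ≠ 0) : ((n : ℤ) • 1 + L).det ≠ 0 := by
  intro hA
  obtain ⟨u, hu0, hu⟩ := exists_mulVec_eq_zero_iff.mpr hA
  have hsum : ∑ i, u i = 0 := by
    have h := congrArg (dotProduct 1) hu
    rw [dotProduct_mulVec, vecMul_add, vecMul_smul, h1L, add_zero, vecMul_one] at h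
    simpa [dotProduct, ← Finset.mul_sum, hn] using h
  refine hdet (exists_mulVec_eq_zero_iff.mp ⟨Sum.elim u 0, fun h => hu0 ?_, ?_⟩)
  · simpa using congrArg (· ∘ Sum.inl) h
  · rw [coneLaplacian_mulVec_sumElim, hu]
    simp [hsum]

theorem smul_one_add_mulVec_one (hL1 : L *ᵥ 1 = 0) :
    ((n : ℤ) • 1 + L) *ᵥ 1 = (n : ℤ) • 1 := by
  rw [add_mulVec, hL1, add_zero, smul_mulVec, one_mulVec]

theorem sumElim_zero_mem_range_coneLaplacian_iff (hk : 0 < k) (hnm : m + 1 = n)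
    (hL1 : L *ᵥ 1 = 0) (hA : ((n : ℤ) • 1 + L).det ≠ 0) (v : Fin m → ℤ) :
    Sum.elim (0 : Fin k → ℤ) v ∈ LinearMap.range (coneLaplacian n L m).mulVecLin ↔
      ∀ c, ((n + k : ℕ) : ℤ) ∣ v c := by
  constructor
  · rintro ⟨w, hw⟩ c
    obtain ⟨x, y, rfl⟩ : ∃ x y, w = Sum.elim x y := ⟨_, _, (Sum.elim_comp_inl_inr w).symm⟩
    rw [mulVecLin_apply, coneLaplacian_mulVec_sumElim, Sum.elim_eq_iff, sub_eq_zero] at hw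
    obtain ⟨hx, rfl⟩ := hw
    have hnx : ∀ i, (n : ℤ) * x i = ∑ c, y c := fun i => by
      simpa using congrFun (smul_eq_smul_one_of_mulVec_eq_smul_one hA
        (smul_one_add_mulVec_one hL1) hx) i
    have hn : (n : ℤ) ≠ 0 := by omega
    have hconst : ∀ i, x i = x ⟨0, hk⟩ := fun i =>
      mul_left_cancel₀ hn ((hnx i).trans (hnx _).symm)
    have hsum : ∑ i, x i = k * x ⟨0, hk⟩ := by simp [hconst]
    refine ⟨y c - x ⟨0, hk⟩, ?_⟩
    simp only [Pi.sub_apply, Pi.smul_apply, Pi.one_apply, smul_eq_mul, mul_one, hsum,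
      ← hnx ⟨0, hk⟩]
    push_cast
    ring
  · intro hv
    choose w hw using hv
    refine ⟨Sum.elim ((∑ c, w c) • 1) (w + (∑ c, w c) • 1), ?_⟩
    rw [mulVecLin_apply, coneLaplacian_mulVec_sumElim, mulVec_smul,
      smul_one_add_mulVec_one hL1]
    subst hnm
    refine Sum.elim_eq_iff.mpr ⟨funext fun i => ?_, funext fun c => ?_⟩
    · simp only [Pi.add_apply, Pi.sub_apply, Pi.smul_apply, Pi.one_apply, Pi.zero_apply,
        smul_eq_mul, mul_one, Finset.sum_add_distrib, Finset.sum_const, Finset.card_univ,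
        Fintype.card_fin, nsmul_eq_mul]
      push_cast
      ring
    · simp only [Pi.add_apply, Pi.sub_apply, Pi.smul_apply, Pi.one_apply, smul_eq_mul, mul_one,
        Finset.sum_add_distrib, Finset.sum_const, Finset.card_univ, Fintype.card_fin,
        nsmul_eq_mul]
      rw [hw c]
      push_cast
      ring

theorem comap_mkQ_range_cokerInr_coneLaplacian (hnm : m + 1 = n) (hL1 : L *ᵥ 1 = 0) :
    (cokerInr (coneLaplacian n L m)).range.comap
        (LinearMap.range (coneLaplacian n L m).mulVecLin).mkQ.toAddMonoidHom =
      ((LinearMap.range ((n : ℤ) • 1 + L).mulVecLin).toAddSubgroup ⊔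
        AddSubgroup.zmultiples 1).comap (LinearMap.funLeft ℤ ℤ Sum.inl).toAddMonoidHom := by
  ext w
  obtain ⟨x, y, rfl⟩ : ∃ x y, w = Sum.elim x y := ⟨_, _, (Sum.elim_comp_inl_inr w).symm⟩
  have hπ : LinearMap.funLeft ℤ ℤ Sum.inl (Sum.elim x y) = x := rfl
  simp only [AddSubgroup.mem_comap, AddMonoidHom.mem_range, LinearMap.toAddMonoidHom_coe,
    Submodule.mkQ_apply, hπ, AddSubgroup.mem_sup, Submodule.mem_toAddSubgroup,
    AddSubgroup.mem_zmultiples_iff]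
  constructor
  · rintro ⟨v, hv⟩
    obtain ⟨z, hz⟩ := (Submodule.Quotient.eq _).mp hv
    obtain ⟨a, b, rfl⟩ : ∃ a b, z = Sum.elim a b := ⟨_, _, (Sum.elim_comp_inl_inr z).symm⟩
    rw [mulVecLin_apply, coneLaplacian_mulVec_sumElim, ← Sum.elim_sub_sub, Sum.elim_eq_iff] at hz
    refine ⟨_, ⟨-a, rfl⟩, _, ⟨∑ c, b c, rfl⟩, ?_⟩
    rw [mulVecLin_apply, mulVec_neg]
    linear_combination (norm := module) -hz.1
  · rintro ⟨_, ⟨u, rfl⟩, _, ⟨t, rfl⟩, rfl⟩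
    -- `L̃ₙ 1 = 1`, so `L̃ₙ (u + t • 1, t • 1) = (A u + t • 1, (t - ∑ u) • 1)`.
    refine ⟨y - (t - ∑ i, u i) • 1, (Submodule.Quotient.eq _).mpr
      ⟨-Sum.elim (u + t • 1) (t • 1), ?_⟩⟩
    rw [mulVecLin_apply, mulVecLin_apply, mulVec_neg, coneLaplacian_mulVec_sumElim,
      ← Sum.elim_sub_sub, ← Sum.elim_neg_neg, Sum.elim_eq_iff, mulVec_add, mulVec_smul,
      smul_one_add_mulVec_one hL1]
    subst hnm
    refine ⟨funext fun i => ?_, funext fun c => ?_⟩ <;>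
    · simp only [Pi.add_apply, Pi.sub_apply, Pi.neg_apply, Pi.smul_apply, Pi.one_apply,
          Pi.zero_apply, smul_eq_mul, mul_one, Finset.sum_add_distrib, Finset.sum_const,
          Finset.card_univ, Fintype.card_fin, nsmul_eq_mul]
      push_cast
      ring

theorem addOrderOf_one_quotient_range_smul_one_add (hk : 0 < k) (hL1 : L *ᵥ 1 = 0)
    (hA : ((n : ℤ) • 1 + L).det ≠ 0) :
    addOrderOf ((1 : Fin k → ℤ) :
      (Fin k → ℤ) ⧸ (LinearMap.range ((n : ℤ) • 1 + L).mulVecLin).toAddSubgroup) = n := by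
  have hmem : ∀ t : ℤ,
      t • (1 : Fin k → ℤ) ∈ LinearMap.range ((n : ℤ) • 1 + L).mulVecLin ↔ (n : ℤ) ∣ t := by
    intro t
    constructor
    · rintro ⟨u, hu⟩
      have hnu := smul_eq_smul_one_of_mulVec_eq_smul_one hA
        (smul_one_add_mulVec_one hL1) hu
      exact ⟨u ⟨0, hk⟩, by simpa using (congrFun hnu ⟨0, hk⟩).symm⟩
    · rintro ⟨s, rfl⟩
      refine ⟨s • 1, ?_⟩
      rw [mulVecLin_apply, mulVec_smul, smul_one_add_mulVec_one hL1, smul_smul, mul_comm]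
  have hdvd : ∀ t : ℤ, (addOrderOf ((1 : Fin k → ℤ) :
      (Fin k → ℤ) ⧸ (LinearMap.range ((n : ℤ) • 1 + L).mulVecLin).toAddSubgroup) : ℤ) ∣ t ↔
        (n : ℤ) ∣ t := fun t => by
    rw [addOrderOf_dvd_iff_zsmul_eq_zero, ← QuotientAddGroup.mk_zsmul,
      QuotientAddGroup.eq_zero_iff, Submodule.mem_toAddSubgroup, hmem]
  exact Nat.dvd_antisymm (Int.natCast_dvd_natCast.mp ((hdvd n).mpr dvd_rfl))
    (Int.natCast_dvd_natCast.mp ((hdvd _).mp dvd_rfl))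

theorem index_range_cokerInr_coneLaplacian_mul (hk : 0 < k) (hnm : m + 1 = n)
    (hL1 : L *ᵥ 1 = 0) (hA : ((n : ℤ) • 1 + L).det ≠ 0) :
    (cokerInr (coneLaplacian n L m)).range.index * n = ((n : ℤ) • 1 + L).det.natAbs := by
  rw [← AddSubgroup.index_comap_of_surjective _
      (f := (LinearMap.range (coneLaplacian n L m).mulVecLin).mkQ.toAddMonoidHom)
      (Submodule.mkQ_surjective _),
    comap_mkQ_range_cokerInr_coneLaplacian hnm hL1,
    AddSubgroup.index_comap_of_surjective _
      (LinearMap.funLeft_surjective_of_injective ℤ ℤ _ Sum.inl_injective),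
    ← index_range_mulVecLin _ hA, AddSubgroup.index_eq_index_sup_zmultiples_mul_addOrderOf
      (LinearMap.range ((n : ℤ) • 1 + L).mulVecLin).toAddSubgroup 1,
    addOrderOf_one_quotient_range_smul_one_add hk hL1 hA]

end Cone

/-- Theorem A of Brown. The cokernel `C` of the reduced Laplacian `L̃ₙ`
has a subgroup `S ≅ (ℤ/(n+k)ℤ)^{n-1}` whose quotient `C/S` is a finite group `Hₙ` of order
`|p_L(-n)|/n`; i.e. there is a short exact sequence
`0 → (ℤ/(n+k)ℤ)^{n-1} → C → Hₙ → 0`. -/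
theorem cone_critical_group_ses
    (k n : ℕ) (hk : 1 ≤ k) (hn : 2 ≤ n)
    (L : Matrix (Fin k) (Fin k) ℤ)
    (hrow : ∀ i, ∑ j, L i j = 0) (hcol : ∀ j, ∑ i, L i j = 0)
    (Ln : Matrix (Fin k ⊕ Fin (n - 1)) (Fin k ⊕ Fin (n - 1)) ℤ)
    (hLn : Ln = Matrix.fromBlocks
      ((n : ℤ) • 1 + L) (-(Matrix.of fun _ _ => 1))
      (-(Matrix.of fun _ _ => 1)) (((n + k : ℕ) : ℤ) • 1 - Matrix.of fun _ _ => 1))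
    (hdet : Ln.det ≠ 0) :
    ∃ S : AddSubgroup ((Fin k ⊕ Fin (n - 1) → ℤ) ⧸ LinearMap.range Ln.mulVecLin),
      Nonempty (S ≃+ (Fin (n - 1) → ZMod (n + k))) ∧
      Finite (((Fin k ⊕ Fin (n - 1) → ℤ) ⧸ LinearMap.range Ln.mulVecLin) ⧸ S) ∧
      (n : ℤ) *
        (Nat.card (((Fin k ⊕ Fin (n - 1) → ℤ) ⧸ LinearMap.range Ln.mulVecLin) ⧸ S) : ℤ)
        = |((-(n : ℤ)) • 1 - L).det| := by
  replace hLn : Ln = coneLaplacian n L (n - 1) := hLn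
  subst hLn
  have hL1 : L *ᵥ 1 = 0 := funext fun i => by simp [mulVec, dotProduct, hrow]
  have h1L : 1 ᵥ* L = 0 := funext fun j => by simp [vecMul, dotProduct, hcol]
  have hnm : n - 1 + 1 = n := by omega
  have hA := det_ne_zero_of_det_coneLaplacian_ne_zero (by omega) h1L hdet
  have hindex := index_range_cokerInr_coneLaplacian_mul hk hnm hL1 hA
  refine ⟨(cokerInr (coneLaplacian n L (n - 1))).range,
    nonempty_range_addEquiv_pi_zmod _ _ fun v => ?_, Nat.finite_of_card_ne_zero ?_, ?_⟩
  · exact (Submodule.Quotient.mk_eq_zero _).trans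
      (sumElim_zero_mem_range_coneLaplacian_iff hk hnm hL1 hA v)
  · exact left_ne_zero_of_mul (hindex.trans_ne (Int.natAbs_ne_zero.mpr hA))
  · rw [show (-(n : ℤ)) • (1 : Matrix (Fin k) (Fin k) ℤ) - L = -((n : ℤ) • 1 + L) by
        rw [neg_smul, neg_add'],
      det_neg, abs_mul, abs_pow, abs_neg, abs_one, one_pow, one_mul, Int.abs_eq_natAbs,
      ← hindex, mul_comm]
    rfl
end

section
/- Let L be the 4×4 Laplacian matrix of the path graph on 4 vertices, i.e., L = [[1,−1,0,0],[−1,2,−1,0],[0,−1,2,−1],[0,0,−1,1]], and for an integer n ≥ 1 let Mₙ = nI₄ + L + J₄, where J₄ is the 4×4 all-ones matrix. Then the cokernel ℤ⁴/Mₙ(ℤ⁴) is a cyclic group of order det(Mₙ) = (n² + 4n + 2)(n + 4)(n + 2). -/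
open Matrix

set_option maxHeartbeats 1000000 in
/-- Example 1. For the path graph `P₄` with Laplacian `L` and
`Mₙ = nI₄ + L + J₄`, the cokernel `ℤ⁴/Mₙ(ℤ⁴)` is cyclic of order
`(n² + 4n + 2)(n + 4)(n + 2)`. -/
theorem coker_path4_cone_cyclic
    (n : ℕ) (hn : 1 ≤ n)
    (L : Matrix (Fin 4) (Fin 4) ℤ)
    (hL : L = !![1, -1, 0, 0; -1, 2, -1, 0; 0, -1, 2, -1; 0, 0, -1, 1])
    (M : Matrix (Fin 4) (Fin 4) ℤ)
    (hM : M = (n : ℤ) • 1 + L + Matrix.of fun _ _ => 1) :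
    IsAddCyclic ((Fin 4 → ℤ) ⧸ LinearMap.range M.mulVecLin) ∧
    Nat.card ((Fin 4 → ℤ) ⧸ LinearMap.range M.mulVecLin)
      = (n ^ 2 + 4 * n + 2) * (n + 4) * (n + 2) := by
  have hone : (1 : Matrix (Fin 4) (Fin 4) ℤ)
      = !![1,0,0,0; 0,1,0,0; 0,0,1,0; 0,0,0,1] := by
    ext i j
    fin_cases i <;> fin_cases j <;>
      simp only [Matrix.one_apply, Matrix.cons_val', Matrix.cons_val_zero, Matrix.cons_val_one,
        Matrix.head_cons, Matrix.cons_val_two, Matrix.tail_cons, Matrix.cons_val_three,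
        Matrix.empty_val', Matrix.cons_val_fin_one, Matrix.of_apply, Matrix.vecHead,
        Matrix.vecTail, Function.comp] <;> decide
  have hM' : M = !![(n:ℤ) + 2, 0, 1, 1; 0, (n:ℤ) + 3, 0, 1;
      1, 0, (n:ℤ) + 3, 0; 1, 1, 0, (n:ℤ) + 2] := by
    rw [hM, hL, hone]
    ext i j
    fin_cases i <;> fin_cases j <;>
      simp [Matrix.add_apply, Matrix.smul_apply, Matrix.vecHead, Matrix.vecTail] <;> ring
  clear hM hL
  subst hM'
  set d : ℕ := (n ^ 2 + 4 * n + 2) * (n + 4) * (n + 2) with hd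
  have hdZ : (d : ℤ) = (n:ℤ) ^ 4 + 10 * (n:ℤ) ^ 3 + 34 * (n:ℤ) ^ 2 + 44 * (n:ℤ) + 16 := by
    rw [hd]; push_cast; ring
  -- w = -(last row of U) from the Smith normal form computation: U M V = diag(1,1,1,-d)
  set w : Fin 4 → ℤ := ![-((n:ℤ) ^ 2 + 5 * (n:ℤ) + 5), -1,
    (n:ℤ) ^ 3 + 7 * (n:ℤ) ^ 2 + 14 * (n:ℤ) + 7, (n:ℤ) + 3] with hw
  -- the linear map to ZMod d
  let φ : (Fin 4 → ℤ) →ₗ[ℤ] ZMod d :=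
  { toFun := fun x => ((w ⬝ᵥ x : ℤ) : ZMod d)
    map_add' := fun x y => by
      show ((w ⬝ᵥ (x + y) : ℤ) : ZMod d) = ((w ⬝ᵥ x : ℤ) : ZMod d) + ((w ⬝ᵥ y : ℤ) : ZMod d)
      rw [dotProduct_add]; push_cast; ring
    map_smul' := fun c x => by
      show ((w ⬝ᵥ (c • x) : ℤ) : ZMod d) = c • ((w ⬝ᵥ x : ℤ) : ZMod d)
      rw [dotProduct_smul, zsmul_eq_mul, zsmul_eq_mul]; push_cast; ring }
  have hφ : ∀ x, φ x = ((w ⬝ᵥ x : ℤ) : ZMod d) := fun _ => rfl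
  -- surjectivity
  have hsurj : Function.Surjective φ := by
    intro c
    obtain ⟨m, rfl⟩ := ZMod.intCast_surjective (n := d) c
    refine ⟨fun i => if i = 1 then -m else 0, ?_⟩
    rw [hφ]
    congr 1
    simp [hw, dotProduct, Fin.sum_univ_four]
  -- kernel = range of M
  have hker : LinearMap.ker φ = LinearMap.range
      (!![(n:ℤ) + 2, 0, 1, 1; 0, (n:ℤ) + 3, 0, 1;
        1, 0, (n:ℤ) + 3, 0; 1, 1, 0, (n:ℤ) + 2]).mulVecLin := by
    ext x
    simp only [LinearMap.mem_ker, LinearMap.mem_range, hφ,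
      ZMod.intCast_zmod_eq_zero_iff_dvd]
    constructor
    · rintro ⟨k, hk⟩
      have hk' : w ⬝ᵥ x = (d : ℤ) * k := hk
      rw [hdZ] at hk'
      simp only [hw, dotProduct, Fin.sum_univ_four, Matrix.cons_val_zero,
        Matrix.cons_val_one, Matrix.head_cons, Matrix.cons_val_two, Matrix.tail_cons,
        Matrix.cons_val_three] at hk'
      refine ⟨![x 2 - ((n:ℤ) + 3) * k,
        (-(x 2) + x 3) - ((n:ℤ) + 2) * (x 0 - ((n:ℤ) + 2) * x 2)
          - ((n:ℤ) ^ 3 + 7 * (n:ℤ) ^ 2 + 14 * (n:ℤ) + 7) * k,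
        k,
        x 0 - ((n:ℤ) + 2) * x 2 + ((n:ℤ) ^ 2 + 5 * (n:ℤ) + 5) * k], ?_⟩
      rw [Matrix.mulVecLin_apply]
      funext i
      fin_cases i <;>
        simp [Matrix.mulVec, dotProduct, Fin.sum_univ_four, Matrix.vecHead, Matrix.vecTail] <;>
        first
          | linear_combination hk'
          | linear_combination -hk'
          | ring
    · rintro ⟨y, rfl⟩
      refine ⟨y 2, ?_⟩
      rw [Matrix.mulVecLin_apply, hdZ]
      simp [hw, Matrix.mulVec, dotProduct, Fin.sum_univ_four, Matrix.vecHead, Matrix.vecTail]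
      ring
  have e : ((Fin 4 → ℤ) ⧸ LinearMap.range
      (!![(n:ℤ) + 2, 0, 1, 1; 0, (n:ℤ) + 3, 0, 1;
        1, 0, (n:ℤ) + 3, 0; 1, 1, 0, (n:ℤ) + 2]).mulVecLin) ≃ₗ[ℤ] ZMod d := by
    rw [← hker]
    exact φ.quotKerEquivOfSurjective hsurj
  constructor
  · exact isAddCyclic_of_surjective e.symm.toAddEquiv.toAddMonoidHom e.symm.surjective
  · rw [Nat.card_congr e.toEquiv, Nat.card_zmod]
end

section
/- Let L be the 4×4 Laplacian matrix of the path graph P₄ on 4 vertices and let n ≥ 2 be an integer. Let L̃ₙ be the (n+3)×(n+3) block matrix [[nI₄ + L, −J], [−J, (n+4)Iₙ₋₁ − J]] (each J a block of all 1s), the reduced Laplacian of the n-th iterated cone over P₄. Then ℤ^{n+3}/L̃ₙ(ℤ^{n+3}) ≅ (ℤ/(n+4)ℤ)^{n−2} ⊕ ℤ/((n² + 4n + 2)(n + 4)(n + 2))ℤ. -/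
namespace Crit4

open Matrix Finset Sum

/-- The path graph Laplacian. -/
def P4L : Matrix (Fin 4) (Fin 4) ℤ := !![1, -1, 0, 0; -1, 2, -1, 0; 0, -1, 2, -1; 0, 0, -1, 1]

/-- index type -/
abbrev I4 (n : ℕ) := Fin 4 ⊕ Fin (n - 1)

def LnMat (n : ℕ) : Matrix (I4 n) (I4 n) ℤ :=
  Matrix.fromBlocks
      ((n : ℤ) • 1 + P4L) (-(Matrix.of fun _ _ => 1))
      (-(Matrix.of fun _ _ => 1)) (((n + 4 : ℕ) : ℤ) • 1 - Matrix.of fun _ _ => 1)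

variable (n : ℕ)

def X0 (x : I4 n → ℤ) : ℤ := ∑ j ∈ univ.filter (fun j : Fin (n-1) => j.val = 0), x (inr j)
def X1 (x : I4 n → ℤ) : ℤ := ∑ j ∈ univ.filter (fun j : Fin (n-1) => j.val = 1), x (inr j)
def S1 (x : I4 n → ℤ) : ℤ := ∑ j ∈ univ.filter (fun j : Fin (n-1) => 1 ≤ j.val), x (inr j)
def S2 (x : I4 n → ℤ) : ℤ := ∑ j ∈ univ.filter (fun j : Fin (n-1) => 2 ≤ j.val), x (inr j)
def SA (x : I4 n → ℤ) : ℤ := ∑ i : Fin 4, x (inl i)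
def Sall (x : I4 n → ℤ) : ℤ := ∑ j : Fin (n-1), x (inr j)

/-- stage 1 row transformation -/
def f1 (x : I4 n → ℤ) : I4 n → ℤ :=
  Sum.elim (fun i => x (inl i))
    (fun j => if j.val = 0 then X0 n x
      else if j.val = 1 then -((n:ℤ) - 2) * X0 n x + S1 n x
      else x (inr j) - X0 n x)

def f1i (x : I4 n → ℤ) : I4 n → ℤ :=
  Sum.elim (fun i => x (inl i))
    (fun j => if j.val = 0 then X0 n x
      else if j.val = 1 then X0 n x + X1 n x - S2 n x
      else X0 n x + x (inr j))

/-- stage 1 column transformation -/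
def g1 (x : I4 n → ℤ) : I4 n → ℤ :=
  Sum.elim (fun i => x (inl i) + X1 n x)
    (fun j => if j.val = 0 then X0 n x + X1 n x
      else if j.val = 1 then X0 n x + 2 * x (inr j) - S2 n x
      else X0 n x + X1 n x + x (inr j))

def g1i (x : I4 n → ℤ) : I4 n → ℤ :=
  Sum.elim (fun i => x (inl i) + ((n:ℤ) - 2) * X0 n x - S1 n x)
    (fun j => if j.val = 0 then ((n:ℤ) - 1) * X0 n x - S1 n x
      else if j.val = 1 then -((n:ℤ) - 2) * X0 n x + S1 n x
      else x (inr j) - X0 n x)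

/-- stage 2 row transformation (U5) -/
def f2 (x : I4 n → ℤ) : I4 n → ℤ :=
  Sum.elim (fun i =>
      ![ -(X0 n x),
         -(x (inl 2)),
         -(x (inl 3)),
         -((n:ℤ)+2) * x (inl 0) - ((n:ℤ)+1) * x (inl 1) + x (inl 2)
           + ((n:ℤ)+2)^2 * x (inl 3) - ((n:ℤ)+1)^2 * X0 n x ] i)
    (fun j => if j.val = 0 then
        -((n:ℤ)+3)^2 * x (inl 0) - ((n:ℤ)^2+5*n+5) * x (inl 1) + ((n:ℤ)+3) * x (inl 2)
          + ((n:ℤ)+3) * ((n:ℤ)^2+5*n+5) * x (inl 3) - ((n:ℤ)+2) * ((n:ℤ)^2+4*n+2) * X0 n x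
      else x (inr j))

def f2i (x : I4 n → ℤ) : I4 n → ℤ :=
  Sum.elim (fun i =>
      ![ ((n:ℤ)+1) * x (inl 0) - ((n:ℤ)+2) * x (inl 1) - ((n:ℤ)^2+5*n+5) * x (inl 2)
           - ((n:ℤ)^2+5*n+5) * x (inl 3) + ((n:ℤ)+1) * X0 n x,
         -(x (inl 0)) + ((n:ℤ)+3) * x (inl 1) + ((n:ℤ)^2+5*n+6) * x (inl 2)
           + ((n:ℤ)+3)^2 * x (inl 3) - ((n:ℤ)+2) * X0 n x,
         -(x (inl 1)),
         -(x (inl 2)) ] i)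
    (fun j => if j.val = 0 then -(x (inl 0)) else x (inr j))

/-- stage 2 column transformation (V5) -/
def g2 (x : I4 n → ℤ) : I4 n → ℤ :=
  Sum.elim (fun i =>
      ![ x (inl 0) - x (inl 1) - ((n:ℤ)+3) * x (inl 2) - ((n:ℤ)+2) * x (inl 3)
           + ((n:ℤ)^4+8*n^3+21*n^2+20*n+5) * X0 n x,
         x (inl 1) + ((n:ℤ)+2) * x (inl 2) + ((n:ℤ)+4) * x (inl 3)
           - ((n:ℤ)^4+10*n^3+33*n^2+41*n+15) * X0 n x,
         x (inl 2) + 2 * x (inl 3) - (2*(n:ℤ)^3+12*n^2+19*n+7) * X0 n x,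
         x (inl 3) - ((n:ℤ)^3+6*n^2+10*n+3) * X0 n x ] i)
    (fun j => if j.val = 0 then x (inl 3) - ((n:ℤ)^3+6*n^2+10*n+4) * X0 n x
      else x (inr j))

def g2i (x : I4 n → ℤ) : I4 n → ℤ :=
  Sum.elim (fun i =>
      ![ x (inl 0) + x (inl 1) + x (inl 2) + x (inl 3) - 5 * X0 n x,
         x (inl 1) - ((n:ℤ)+2) * x (inl 2) + x (inl 3) + ((n:ℤ)-1) * X0 n x,
         x (inl 2) - ((n:ℤ)+1) * x (inl 3) + ((n:ℤ)-1) * X0 n x,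
         ((n:ℤ)^3+6*n^2+10*n+4) * x (inl 3) - ((n:ℤ)^3+6*n^2+10*n+3) * X0 n x ] i)
    (fun j => if j.val = 0 then x (inl 3) - X0 n x else x (inr j))

/-- intermediate block-diagonal form -/
def Bmap (x : I4 n → ℤ) : I4 n → ℤ :=
  Sum.elim (fun i =>
      ![ ((n:ℤ)+1) * x (inl 0) - x (inl 1) - ((n:ℤ)-1) * X0 n x,
         -(x (inl 0)) + ((n:ℤ)+2) * x (inl 1) - x (inl 2) - ((n:ℤ)-1) * X0 n x,
         -(x (inl 1)) + ((n:ℤ)+2) * x (inl 2) - x (inl 3) - ((n:ℤ)-1) * X0 n x,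
         -(x (inl 2)) + ((n:ℤ)+1) * x (inl 3) - ((n:ℤ)-1) * X0 n x ] i)
    (fun j => if j.val = 0 then 5 * X0 n x - SA n x
      else ((n:ℤ)+4) * x (inr j))

def Nn : ℕ := (n ^ 2 + 4 * n + 2) * (n + 4) * (n + 2)

def dd : I4 n → ℤ :=
  Sum.elim (fun _ => 1) (fun j => if j.val = 0 then (Nn n : ℤ) else ((n + 4 : ℕ) : ℤ))

def Dmap (x : I4 n → ℤ) : I4 n → ℤ := fun i => dd n i * x i


lemma sum_val_eq {m : ℕ} (k : ℕ) (h : k < m) (g : Fin m → ℤ) :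
    ∑ j ∈ univ.filter (fun j : Fin m => j.val = k), g j = g ⟨k, h⟩ := by
  rw [Finset.sum_filter]
  rw [Finset.sum_eq_single ⟨k, h⟩]
  · simp
  · intro b _ hb
    simp only [if_neg (fun hbk => hb (Fin.ext hbk))]
  · simp

lemma card_ge2 {m : ℕ} (h : 2 ≤ m) :
    (univ.filter (fun j : Fin m => 2 ≤ j.val)).card = m - 2 := by
  have : (univ.filter (fun j : Fin m => 2 ≤ j.val)) =
      (univ.filter (fun j : Fin m => ¬ j.val < 2)) := by
    apply Finset.filter_congr; intro j _; simp [Nat.not_lt, Nat.lt_iff_add_one_le]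
  rw [this, Finset.filter_not, Finset.card_sdiff_of_subset (Finset.filter_subset _ _)]
  have h2 : (univ.filter (fun j : Fin m => j.val < 2)).card = 2 := by
    have : (univ.filter (fun j : Fin m => j.val < 2)) =
        {⟨0, by omega⟩, ⟨1, by omega⟩} := by
      ext j; simp only [Finset.mem_filter, Finset.mem_univ, true_and, Finset.mem_insert,
        Finset.mem_singleton]
      constructor
      · intro hj
        have h01 : j.val = 0 ∨ j.val = 1 := by omega
        rcases h01 with h0 | h0
        · exact Or.inl (Fin.ext h0)
        · exact Or.inr (Fin.ext h0)
      · rintro (rfl | rfl) <;> simp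
    rw [this]; rw [Finset.card_insert_of_notMem (by simp [Fin.ext_iff]), Finset.card_singleton]
  rw [h2]; simp

lemma sum_const_ge2 {m : ℕ} (h : 2 ≤ m) (c : ℤ) :
    ∑ _j ∈ univ.filter (fun j : Fin m => 2 ≤ j.val), c = ((m : ℤ) - 2) * c := by
  rw [Finset.sum_const, card_ge2 h, nsmul_eq_mul]
  congr 1
  omega

/-- splitting the ≥1 sum -/
lemma S1_split (x : I4 n → ℤ) : S1 n x = X1 n x + S2 n x := by
  classical
  unfold S1 X1 S2
  rw [← Finset.sum_filter_add_sum_filter_not (univ.filter (fun j : Fin (n-1) => 1 ≤ j.val))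
      (fun j => j.val = 1)]
  congr 1
  · rw [Finset.filter_filter]
    apply Finset.sum_congr _ (fun _ _ => rfl)
    apply Finset.filter_congr
    intro j _; omega
  · rw [Finset.filter_filter]
    apply Finset.sum_congr _ (fun _ _ => rfl)
    apply Finset.filter_congr
    intro j _; omega

/-- splitting the total sum -/
lemma Sall_split (x : I4 n → ℤ) : Sall n x = X0 n x + S1 n x := by
  classical
  unfold Sall X0 S1
  rw [← Finset.sum_filter_add_sum_filter_not (univ : Finset (Fin (n-1))) (fun j => j.val = 0)]
  congr 1
  apply Finset.sum_congr _ (fun _ _ => rfl)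
  apply Finset.filter_congr
  intro j _; omega


lemma X0_cond (F : I4 n → ℤ) (A : ℤ) (h0 : 0 < n - 1)
    (hF : ∀ j : Fin (n-1), j.val = 0 → F (inr j) = A) : X0 n F = A := by
  unfold X0; rw [sum_val_eq 0 h0]; exact hF _ rfl

lemma X0_eq' (x : I4 n → ℤ) (j : Fin (n-1)) (hj : j.val = 0) : X0 n x = x (inr j) := by
  unfold X0
  rw [sum_val_eq 0 (by omega)]
  congr 1
  exact congrArg inr (Fin.ext hj.symm)

lemma X1_cond (F : I4 n → ℤ) (A : ℤ) (h1 : 1 < n - 1)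
    (hF : ∀ j : Fin (n-1), j.val = 1 → F (inr j) = A) : X1 n F = A := by
  unfold X1; rw [sum_val_eq 1 h1]; exact hF _ rfl

lemma X1_eq' (x : I4 n → ℤ) (j : Fin (n-1)) (hj : j.val = 1) : X1 n x = x (inr j) := by
  unfold X1
  rw [sum_val_eq 1 (by omega)]
  congr 1
  exact congrArg inr (Fin.ext hj.symm)

lemma X1_deg (F : I4 n → ℤ) (h : n - 1 ≤ 1) : X1 n F = 0 := by
  unfold X1
  rw [Finset.filter_false_of_mem, Finset.sum_empty]
  intro j _
  have := j.isLt
  omega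

lemma S2_deg (F : I4 n → ℤ) (h : n - 1 ≤ 2) : S2 n F = 0 := by
  unfold S2
  rw [Finset.filter_false_of_mem, Finset.sum_empty]
  intro j _
  have := j.isLt
  omega

lemma S1_deg (F : I4 n → ℤ) (h : n - 1 ≤ 1) : S1 n F = 0 := by
  unfold S1
  rw [Finset.filter_false_of_mem, Finset.sum_empty]
  intro j _
  have := j.isLt
  omega

lemma S2_cond (F : I4 n → ℤ) (C : Fin (n-1) → ℤ)
    (hF : ∀ j : Fin (n-1), 2 ≤ j.val → F (inr j) = C j) :
    S2 n F = ∑ j ∈ univ.filter (fun j : Fin (n-1) => 2 ≤ j.val), C j := by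
  unfold S2
  exact Finset.sum_congr rfl (fun j hj => hF j (by simpa using hj))

/-- sum computation for affine functions on the ≥2 range -/
lemma sum_ge2_affine (x : I4 n → ℤ) (c e : ℤ) (h : 2 ≤ n - 1) :
    ∑ j ∈ univ.filter (fun j : Fin (n-1) => 2 ≤ j.val), (c + e * x (inr j))
      = ((n:ℤ) - 3) * c + e * S2 n x := by
  rw [Finset.sum_add_distrib, ← Finset.mul_sum, sum_const_ge2 h]
  have : ((n - 1 : ℕ) : ℤ) = (n : ℤ) - 1 := by omega
  rw [this]
  unfold S2
  ring

lemma Ln_mulVec (y : I4 n → ℤ) :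
    (LnMat n).mulVec y = Sum.elim
      (fun i => (n:ℤ) * y (inl i) + (∑ k : Fin 4, P4L i k * y (inl k)) - Sall n y)
      (fun j => -SA n y + ((n:ℤ) + 4) * y (inr j) - Sall n y) := by
  funext i
  rcases i with i | j
  · simp only [Matrix.mulVec, dotProduct, Fintype.sum_sum_type, LnMat,
      Matrix.fromBlocks_apply₁₁, Matrix.fromBlocks_apply₁₂, Sum.elim_inl,
      Matrix.add_apply, Matrix.smul_apply, Matrix.one_apply, Matrix.neg_apply,
      Matrix.of_apply, smul_eq_mul, mul_ite, mul_one, mul_zero]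
    simp only [add_mul, ite_mul, zero_mul, neg_mul, one_mul]
    rw [Finset.sum_add_distrib, Finset.sum_ite_eq, if_pos (Finset.mem_univ i)]
    unfold Sall
    rw [Finset.sum_neg_distrib]
    ring
  · simp only [Matrix.mulVec, dotProduct, Fintype.sum_sum_type, LnMat,
      Matrix.fromBlocks_apply₂₁, Matrix.fromBlocks_apply₂₂, Sum.elim_inr,
      Matrix.sub_apply, Matrix.smul_apply, Matrix.one_apply, Matrix.neg_apply,
      Matrix.of_apply, smul_eq_mul, mul_ite, mul_one, mul_zero, sub_mul, ite_mul,
      zero_mul, neg_mul, one_mul]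
    rw [Finset.sum_sub_distrib, Finset.sum_ite_eq, if_pos (Finset.mem_univ j)]
    unfold SA Sall
    push_cast
    rw [Finset.sum_neg_distrib]
    ring

lemma X0_f1 (x : I4 n → ℤ) (h0 : 0 < n - 1) : X0 n (f1 n x) = X0 n x :=
  X0_cond n _ _ h0 (by intro j hj; simp [f1, hj])

lemma X0_f1i (x : I4 n → ℤ) (h0 : 0 < n - 1) : X0 n (f1i n x) = X0 n x :=
  X0_cond n _ _ h0 (by intro j hj; simp [f1i, hj])

lemma X1_f1 (x : I4 n → ℤ) (h1 : 1 < n - 1) :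
    X1 n (f1 n x) = -((n:ℤ) - 2) * X0 n x + S1 n x :=
  X1_cond n _ _ h1 (by intro j hj; simp [f1, hj])

lemma X1_f1i (x : I4 n → ℤ) (h1 : 1 < n - 1) :
    X1 n (f1i n x) = X0 n x + X1 n x - S2 n x :=
  X1_cond n _ _ h1 (by intro j hj; simp [f1i, hj])

lemma S2_f1 (x : I4 n → ℤ) (h2 : 2 ≤ n - 1) :
    S2 n (f1 n x) = S2 n x - ((n:ℤ) - 3) * X0 n x := by
  rw [S2_cond n (f1 n x) (fun j => x (inr j) - X0 n x)
    (by intro j hj; have hj0 : ¬ j.val = 0 := by omega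
        have hj1 : ¬ j.val = 1 := by omega
        simp [f1, hj0, hj1])]
  rw [Finset.sum_sub_distrib, sum_const_ge2 h2]
  have : ((n - 1 : ℕ) : ℤ) = (n : ℤ) - 1 := by omega
  rw [this]
  unfold S2
  ring

lemma S2_f1i (x : I4 n → ℤ) (h2 : 2 ≤ n - 1) :
    S2 n (f1i n x) = S2 n x + ((n:ℤ) - 3) * X0 n x := by
  rw [S2_cond n (f1i n x) (fun j => X0 n x + x (inr j))
    (by intro j hj; have hj0 : ¬ j.val = 0 := by omega
        have hj1 : ¬ j.val = 1 := by omega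
        simp [f1i, hj0, hj1])]
  rw [Finset.sum_add_distrib, sum_const_ge2 h2]
  have : ((n - 1 : ℕ) : ℤ) = (n : ℤ) - 1 := by omega
  rw [this]
  unfold S2
  ring

lemma f1i_f1 (hn : 2 ≤ n) (x : I4 n → ℤ) : f1i n (f1 n x) = x := by
  have h0 : 0 < n - 1 := by omega
  funext i
  rcases i with i | j
  · simp [f1i, f1]
  · by_cases hj0 : j.val = 0
    · simp only [f1i, Sum.elim_inr, if_pos hj0, X0_f1 n x h0]
      exact X0_eq' n x j hj0
    · by_cases hj1 : j.val = 1
      · have h1 : 1 < n - 1 := by have := j.isLt; omega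
        simp only [f1i, Sum.elim_inr, if_neg hj0, if_pos hj1, X0_f1 n x h0,
          X1_f1 n x h1, S2_f1 n x (by omega)]
        rw [S1_split, ← X1_eq' n x j hj1]
        ring
      · have h2 : 2 ≤ j.val := by omega
        have hnn : 2 ≤ n - 1 := by have := j.isLt; omega
        simp only [f1i, Sum.elim_inr, if_neg hj0, if_neg hj1]
        rw [X0_f1 n x h0]
        simp only [f1, Sum.elim_inr, if_neg hj0, if_neg hj1]
        ring

lemma f1_f1i (hn : 2 ≤ n) (x : I4 n → ℤ) : f1 n (f1i n x) = x := by
  have h0 : 0 < n - 1 := by omega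
  funext i
  rcases i with i | j
  · simp [f1i, f1]
  · by_cases hj0 : j.val = 0
    · simp only [f1, Sum.elim_inr, if_pos hj0, X0_f1i n x h0]
      exact X0_eq' n x j hj0
    · by_cases hj1 : j.val = 1
      · have h1 : 1 < n - 1 := by have := j.isLt; omega
        simp only [f1, Sum.elim_inr, if_neg hj0, if_pos hj1, X0_f1i n x h0]
        rw [S1_split, X1_f1i n x h1, S2_f1i n x (by omega), ← X1_eq' n x j hj1]
        ring
      · have h2 : 2 ≤ j.val := by omega
        have hnn : 2 ≤ n - 1 := by have := j.isLt; omega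
        simp only [f1, Sum.elim_inr, if_neg hj0, if_neg hj1]
        rw [X0_f1i n x h0]
        simp only [f1i, Sum.elim_inr, if_neg hj0, if_neg hj1]
        ring

lemma X0_g1 (x : I4 n → ℤ) (h0 : 0 < n - 1) : X0 n (g1 n x) = X0 n x + X1 n x :=
  X0_cond n _ _ h0 (by intro j hj; simp [g1, hj])

lemma X1_g1 (x : I4 n → ℤ) (h1 : 1 < n - 1) :
    X1 n (g1 n x) = X0 n x + 2 * X1 n x - S2 n x := by
  apply X1_cond n _ _ h1
  intro j hj
  simp only [g1, Sum.elim_inr, hj, if_neg (by omega : ¬(1:ℕ) = 0), if_pos rfl, if_true]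
  rw [X1_eq' n x j hj]

lemma S2_g1 (x : I4 n → ℤ) (h2 : 2 ≤ n - 1) :
    S2 n (g1 n x) = ((n:ℤ) - 3) * (X0 n x + X1 n x) + S2 n x := by
  rw [S2_cond n (g1 n x) (fun j => X0 n x + X1 n x + x (inr j))
    (by intro j hj; have hj0 : ¬ j.val = 0 := by omega
        have hj1 : ¬ j.val = 1 := by omega
        simp [g1, hj0, hj1])]
  rw [Finset.sum_add_distrib, sum_const_ge2 h2]
  have : ((n - 1 : ℕ) : ℤ) = (n : ℤ) - 1 := by omega
  rw [this]
  unfold S2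
  ring

lemma X0_g1i (x : I4 n → ℤ) (h0 : 0 < n - 1) :
    X0 n (g1i n x) = ((n:ℤ) - 1) * X0 n x - S1 n x :=
  X0_cond n _ _ h0 (by intro j hj; simp [g1i, hj])

lemma X1_g1i (x : I4 n → ℤ) (h1 : 1 < n - 1) :
    X1 n (g1i n x) = -((n:ℤ) - 2) * X0 n x + S1 n x :=
  X1_cond n _ _ h1 (by intro j hj; simp [g1i, hj])

lemma S2_g1i (x : I4 n → ℤ) (h2 : 2 ≤ n - 1) :
    S2 n (g1i n x) = S2 n x - ((n:ℤ) - 3) * X0 n x := by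
  rw [S2_cond n (g1i n x) (fun j => x (inr j) - X0 n x)
    (by intro j hj; have hj0 : ¬ j.val = 0 := by omega
        have hj1 : ¬ j.val = 1 := by omega
        simp [g1i, hj0, hj1])]
  rw [Finset.sum_sub_distrib, sum_const_ge2 h2]
  have : ((n - 1 : ℕ) : ℤ) = (n : ℤ) - 1 := by omega
  rw [this]
  unfold S2
  ring

lemma g1i_g1 (hn : 2 ≤ n) (x : I4 n → ℤ) : g1i n (g1 n x) = x := by
  have h0 : 0 < n - 1 := by omega
  funext i
  rcases i with i | j
  · by_cases h1 : 1 < n - 1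
    · simp only [g1i, Sum.elim_inl]
      rw [S1_split, X0_g1 n x h0, X1_g1 n x h1, S2_g1 n x (by omega)]
      simp only [g1, Sum.elim_inl]
      ring
    · have hn2 : n = 2 := by omega
      simp only [g1i, Sum.elim_inl]
      rw [S1_deg n _ (by omega), X0_g1 n x h0]
      simp only [g1, Sum.elim_inl]
      rw [X1_deg n _ (by omega)]
      have : (n : ℤ) = 2 := by omega
      rw [this]
      ring
  · by_cases hj0 : j.val = 0
    · by_cases h1 : 1 < n - 1
      · simp only [g1i, Sum.elim_inr, if_pos hj0]
        rw [S1_split, X0_g1 n x h0, X1_g1 n x h1, S2_g1 n x (by omega),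
          ← X0_eq' n x j hj0]
        ring
      · simp only [g1i, Sum.elim_inr, if_pos hj0]
        rw [S1_deg n _ (by omega), X0_g1 n x h0, X1_deg n x (by omega),
          ← X0_eq' n x j hj0]
        have : (n : ℤ) = 2 := by omega
        rw [this]
        ring
    · by_cases hj1 : j.val = 1
      · have h1 : 1 < n - 1 := by have := j.isLt; omega
        simp only [g1i, Sum.elim_inr, if_neg hj0, if_pos hj1]
        rw [S1_split, X0_g1 n x h0, X1_g1 n x h1, S2_g1 n x (by omega),
          ← X1_eq' n x j hj1]
        ring
      · have h2 : 2 ≤ j.val := by omega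
        have h1 : 1 < n - 1 := by have := j.isLt; omega
        simp only [g1i, Sum.elim_inr, if_neg hj0, if_neg hj1]
        rw [X0_g1 n x h0]
        simp only [g1, Sum.elim_inr, if_neg hj0, if_neg hj1]
        ring

lemma g1_g1i (hn : 2 ≤ n) (x : I4 n → ℤ) : g1 n (g1i n x) = x := by
  have h0 : 0 < n - 1 := by omega
  funext i
  rcases i with i | j
  · by_cases h1 : 1 < n - 1
    · simp only [g1, Sum.elim_inl]
      rw [X1_g1i n x h1]
      simp only [g1i, Sum.elim_inl]
      ring
    · simp only [g1, Sum.elim_inl]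
      rw [X1_deg n _ (by omega)]
      simp only [g1i, Sum.elim_inl]
      rw [S1_deg n _ (by omega)]
      have : (n : ℤ) = 2 := by omega
      rw [this]
      ring
  · by_cases hj0 : j.val = 0
    · by_cases h1 : 1 < n - 1
      · simp only [g1, Sum.elim_inr, if_pos hj0]
        rw [X0_g1i n x h0, X1_g1i n x h1, ← X0_eq' n x j hj0]
        ring
      · simp only [g1, Sum.elim_inr, if_pos hj0]
        rw [X0_g1i n x h0, X1_deg n _ (by omega), S1_deg n _ (by omega),
          ← X0_eq' n x j hj0]
        have : (n : ℤ) = 2 := by omega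
        rw [this]
        ring
    · by_cases hj1 : j.val = 1
      · have h1 : 1 < n - 1 := by have := j.isLt; omega
        simp only [g1, Sum.elim_inr, if_neg hj0, if_pos hj1]
        rw [X0_g1i n x h0, S2_g1i n x (by omega)]
        simp only [g1i, Sum.elim_inr, if_neg hj0, if_pos hj1]
        rw [S1_split, ← X1_eq' n x j hj1]
        ring
      · have h2 : 2 ≤ j.val := by omega
        have h1 : 1 < n - 1 := by have := j.isLt; omega
        simp only [g1, Sum.elim_inr, if_neg hj0, if_neg hj1]
        rw [X0_g1i n x h0, X1_g1i n x h1]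
        simp only [g1i, Sum.elim_inr, if_neg hj0, if_neg hj1]
        ring

lemma fmk0 (h : 0 < 4) : (⟨0, h⟩ : Fin 4) = 0 := rfl
lemma fmk1 (h : 1 < 4) : (⟨1, h⟩ : Fin 4) = 1 := rfl
lemma fmk2 (h : 2 < 4) : (⟨2, h⟩ : Fin 4) = 2 := rfl
lemma fmk3 (h : 3 < 4) : (⟨3, h⟩ : Fin 4) = 3 := rfl

/-- simp set for evaluating vector literals -/
lemma X0_f2 (x : I4 n → ℤ) (h0 : 0 < n - 1) :
    X0 n (f2 n x) = -((n:ℤ)+3)^2 * x (inl 0) - ((n:ℤ)^2+5*n+5) * x (inl 1)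
      + ((n:ℤ)+3) * x (inl 2) + ((n:ℤ)+3) * ((n:ℤ)^2+5*n+5) * x (inl 3)
      - ((n:ℤ)+2) * ((n:ℤ)^2+4*n+2) * X0 n x :=
  X0_cond n _ _ h0 (by intro j hj; simp [f2, hj])

lemma X0_f2i (x : I4 n → ℤ) (h0 : 0 < n - 1) :
    X0 n (f2i n x) = -(x (inl 0)) :=
  X0_cond n _ _ h0 (by intro j hj; simp [f2i, hj])

lemma X0_g2 (x : I4 n → ℤ) (h0 : 0 < n - 1) :
    X0 n (g2 n x) = x (inl 3) - ((n:ℤ)^3+6*n^2+10*n+4) * X0 n x :=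
  X0_cond n _ _ h0 (by intro j hj; simp [g2, hj])

lemma X0_g2i (x : I4 n → ℤ) (h0 : 0 < n - 1) :
    X0 n (g2i n x) = x (inl 3) - X0 n x :=
  X0_cond n _ _ h0 (by intro j hj; simp [g2i, hj])

lemma f2i_f2 (hn : 2 ≤ n) (x : I4 n → ℤ) : f2i n (f2 n x) = x := by
  have h0 : 0 < n - 1 := by omega
  funext i
  rcases i with i | j
  · fin_cases i <;>
    · simp only [f2i, Sum.elim_inl, Matrix.cons_val_zero, Matrix.cons_val_one,
        Matrix.head_cons, Matrix.cons_val_two, Matrix.tail_cons, Matrix.cons_val_three,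
        fmk0, fmk1, fmk2, fmk3]
      try rw [X0_f2 n x h0]
      try simp only [f2, Sum.elim_inl, Matrix.cons_val_zero, Matrix.cons_val_one,
        Matrix.head_cons, Matrix.cons_val_two, Matrix.tail_cons, Matrix.cons_val_three,
        fmk0, fmk1, fmk2, fmk3]
      ring
  · by_cases hj0 : j.val = 0
    · simp only [f2i, Sum.elim_inr, if_pos hj0]
      rw [show (f2 n x) (inl 0) = -(X0 n x) from by
        simp [f2, Matrix.cons_val_zero], ← X0_eq' n x j hj0]
      ring
    · simp only [f2i, Sum.elim_inr, if_neg hj0]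
      simp only [f2, Sum.elim_inr, if_neg hj0]

lemma f2_f2i (hn : 2 ≤ n) (x : I4 n → ℤ) : f2 n (f2i n x) = x := by
  have h0 : 0 < n - 1 := by omega
  funext i
  rcases i with i | j
  · fin_cases i <;>
    · simp only [f2, Sum.elim_inl, Matrix.cons_val_zero, Matrix.cons_val_one,
        Matrix.head_cons, Matrix.cons_val_two, Matrix.tail_cons, Matrix.cons_val_three,
        fmk0, fmk1, fmk2, fmk3]
      try rw [X0_f2i n x h0]
      try simp only [f2i, Sum.elim_inl, Matrix.cons_val_zero, Matrix.cons_val_one,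
        Matrix.head_cons, Matrix.cons_val_two, Matrix.tail_cons, Matrix.cons_val_three,
        fmk0, fmk1, fmk2, fmk3]
      ring
  · by_cases hj0 : j.val = 0
    · simp only [f2, Sum.elim_inr, if_pos hj0]
      rw [X0_f2i n x h0]
      simp only [f2i, Sum.elim_inl, Matrix.cons_val_zero, Matrix.cons_val_one,
        Matrix.head_cons, Matrix.cons_val_two, Matrix.tail_cons, Matrix.cons_val_three,
        fmk0, fmk1, fmk2, fmk3]
      rw [← X0_eq' n x j hj0]
      ring
    · simp only [f2, Sum.elim_inr, if_neg hj0]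
      simp only [f2i, Sum.elim_inr, if_neg hj0]

lemma g2i_g2 (hn : 2 ≤ n) (x : I4 n → ℤ) : g2i n (g2 n x) = x := by
  have h0 : 0 < n - 1 := by omega
  funext i
  rcases i with i | j
  · fin_cases i <;>
    · simp only [g2i, Sum.elim_inl, Matrix.cons_val_zero, Matrix.cons_val_one,
        Matrix.head_cons, Matrix.cons_val_two, Matrix.tail_cons, Matrix.cons_val_three,
        fmk0, fmk1, fmk2, fmk3]
      try rw [X0_g2 n x h0]
      try simp only [g2, Sum.elim_inl, Matrix.cons_val_zero, Matrix.cons_val_one,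
        Matrix.head_cons, Matrix.cons_val_two, Matrix.tail_cons, Matrix.cons_val_three,
        fmk0, fmk1, fmk2, fmk3]
      ring
  · by_cases hj0 : j.val = 0
    · simp only [g2i, Sum.elim_inr, if_pos hj0]
      rw [X0_g2 n x h0]
      simp only [g2, Sum.elim_inl, Matrix.cons_val_zero, Matrix.cons_val_one,
        Matrix.head_cons, Matrix.cons_val_two, Matrix.tail_cons, Matrix.cons_val_three,
        fmk0, fmk1, fmk2, fmk3]
      rw [← X0_eq' n x j hj0]
      ring
    · simp only [g2i, Sum.elim_inr, if_neg hj0]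
      simp only [g2, Sum.elim_inr, if_neg hj0]

lemma g2_g2i (hn : 2 ≤ n) (x : I4 n → ℤ) : g2 n (g2i n x) = x := by
  have h0 : 0 < n - 1 := by omega
  funext i
  rcases i with i | j
  · fin_cases i <;>
    · simp only [g2, Sum.elim_inl, Matrix.cons_val_zero, Matrix.cons_val_one,
        Matrix.head_cons, Matrix.cons_val_two, Matrix.tail_cons, Matrix.cons_val_three,
        fmk0, fmk1, fmk2, fmk3]
      try rw [X0_g2i n x h0]
      try simp only [g2i, Sum.elim_inl, Matrix.cons_val_zero, Matrix.cons_val_one,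
        Matrix.head_cons, Matrix.cons_val_two, Matrix.tail_cons, Matrix.cons_val_three,
        fmk0, fmk1, fmk2, fmk3]
      ring
  · by_cases hj0 : j.val = 0
    · simp only [g2, Sum.elim_inr, if_pos hj0]
      rw [X0_g2i n x h0]
      simp only [g2i, Sum.elim_inl, Matrix.cons_val_zero, Matrix.cons_val_one,
        Matrix.head_cons, Matrix.cons_val_two, Matrix.tail_cons, Matrix.cons_val_three,
        fmk0, fmk1, fmk2, fmk3]
      rw [← X0_eq' n x j hj0]
      ring
    · simp only [g2, Sum.elim_inr, if_neg hj0]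
      simp only [g2i, Sum.elim_inr, if_neg hj0]

lemma X0_Ln (y : I4 n → ℤ) (h0 : 0 < n - 1) :
    X0 n ((LnMat n).mulVec y) = -SA n y + ((n:ℤ)+4) * X0 n y - Sall n y := by
  apply X0_cond n _ _ h0
  intro j hj
  rw [Ln_mulVec]
  simp only [Sum.elim_inr]
  rw [X0_eq' n y j hj]

lemma X1_Ln (y : I4 n → ℤ) (h1 : 1 < n - 1) :
    X1 n ((LnMat n).mulVec y) = -SA n y + ((n:ℤ)+4) * X1 n y - Sall n y := by
  apply X1_cond n _ _ h1
  intro j hj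
  rw [Ln_mulVec]
  simp only [Sum.elim_inr]
  rw [X1_eq' n y j hj]

lemma S2_Ln (y : I4 n → ℤ) (h2 : 2 ≤ n - 1) :
    S2 n ((LnMat n).mulVec y) = ((n:ℤ)-3) * (-SA n y - Sall n y) + ((n:ℤ)+4) * S2 n y := by
  rw [S2_cond n _ (fun j => (-SA n y - Sall n y) + ((n:ℤ)+4) * y (inr j))
    (by intro j hj; rw [Ln_mulVec]; simp only [Sum.elim_inr]; ring)]
  rw [sum_ge2_affine n y _ _ h2]

lemma SA_g1 (x : I4 n → ℤ) : SA n (g1 n x) = SA n x + 4 * X1 n x := by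
  unfold SA
  simp only [g1, Sum.elim_inl]
  rw [Finset.sum_add_distrib, Finset.sum_const, Finset.card_univ, Fintype.card_fin,
    nsmul_eq_mul]
  norm_num

lemma Sall_g1_main (x : I4 n → ℤ) (h1 : 1 < n - 1) :
    Sall n (g1 n x) = ((n:ℤ) - 1) * X0 n x + (n:ℤ) * X1 n x := by
  rw [Sall_split, S1_split, X0_g1 n x (by omega), X1_g1 n x h1, S2_g1 n x (by omega)]
  ring

lemma Sall_g1_deg (x : I4 n → ℤ) (h0 : 0 < n - 1) (h1 : ¬ 1 < n - 1) :
    Sall n (g1 n x) = X0 n x := by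
  rw [Sall_split, S1_deg n _ (by omega), X0_g1 n x h0, X1_deg n x (by omega)]
  ring

lemma key1 (hn : 2 ≤ n) (x : I4 n → ℤ) :
    f1 n ((LnMat n).mulVec (g1 n x)) = Bmap n x := by
  have h0 : 0 < n - 1 := by omega
  funext i
  rcases i with i | j
  · -- inl coordinates
    simp only [f1, Sum.elim_inl, Bmap]
    rw [Ln_mulVec]
    simp only [Sum.elim_inl]
    rw [Fin.sum_univ_four]
    by_cases h1 : 1 < n - 1
    · rw [Sall_g1_main n x h1]
      simp only [g1, Sum.elim_inl]
      fin_cases i <;>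
        simp only [P4L, Matrix.cons_val_zero, Matrix.cons_val_one, Matrix.head_cons,
          Matrix.cons_val_two, Matrix.tail_cons, Matrix.cons_val_three, Matrix.of_apply,
          Matrix.cons_val', Matrix.head_fin_const, Matrix.empty_val',
          Matrix.cons_val_fin_one, fmk0, fmk1, fmk2, fmk3] <;> ring
    · have hn2 : (n : ℤ) = 2 := by omega
      rw [Sall_g1_deg n x h0 h1]
      simp only [g1, Sum.elim_inl]
      rw [X1_deg n x (by omega)]
      fin_cases i <;>
        simp only [P4L, Matrix.cons_val_zero, Matrix.cons_val_one, Matrix.head_cons,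
          Matrix.cons_val_two, Matrix.tail_cons, Matrix.cons_val_three, Matrix.of_apply,
          Matrix.cons_val', Matrix.head_fin_const, Matrix.empty_val',
          Matrix.cons_val_fin_one, fmk0, fmk1, fmk2, fmk3] <;>
        rw [hn2] <;> ring
  · by_cases hj0 : j.val = 0
    · simp only [f1, Sum.elim_inr, if_pos hj0, Bmap]
      rw [X0_Ln n _ h0, SA_g1 n x, X0_g1 n x h0]
      by_cases h1 : 1 < n - 1
      · rw [Sall_g1_main n x h1]
        ring
      · have hn2 : (n : ℤ) = 2 := by omega
        rw [Sall_g1_deg n x h0 h1, X1_deg n x (by omega), hn2]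
        ring
    · by_cases hj1 : j.val = 1
      · have h1 : 1 < n - 1 := by have := j.isLt; omega
        simp only [f1, Sum.elim_inr, if_neg hj0, if_pos hj1, Bmap]
        rw [S1_split, X1_Ln n _ h1, S2_Ln n _ (by omega), X0_Ln n _ h0,
          SA_g1 n x, X0_g1 n x h0, X1_g1 n x h1, S2_g1 n x (by omega),
          Sall_g1_main n x h1, ← X1_eq' n x j hj1]
        ring
      · have h2 : 2 ≤ j.val := by omega
        have h1 : 1 < n - 1 := by have := j.isLt; omega
        simp only [f1, Sum.elim_inr, if_neg hj0, if_neg hj1, Bmap]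
        rw [X0_Ln n _ h0, X0_g1 n x h0, Ln_mulVec]
        simp only [Sum.elim_inr]
        simp only [g1, Sum.elim_inr, if_neg hj0, if_neg hj1]
        ring

lemma key2 (hn : 2 ≤ n) (x : I4 n → ℤ) :
    f2 n (Bmap n (g2 n x)) = Dmap n x := by
  have h0 : 0 < n - 1 := by omega
  have hSAy : SA n (g2 n x) = x (inl 0) + 5 * x (inl 3)
      - 5*((n:ℤ)^3+6*n^2+10*n+4) * X0 n x := by
    unfold SA
    rw [Fin.sum_univ_four]
    simp only [g2, Sum.elim_inl, Matrix.cons_val_zero, Matrix.cons_val_one, Matrix.head_cons,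
      Matrix.cons_val_two, Matrix.tail_cons, Matrix.cons_val_three]
    ring
  have hX0B : X0 n (Bmap n (g2 n x)) = 5 * X0 n (g2 n x) - SA n (g2 n x) :=
    X0_cond n _ _ h0 (by intro j hj; simp [Bmap, hj])
  funext i
  rcases i with i | j
  · fin_cases i <;>
    · simp only [f2, Sum.elim_inl, Matrix.cons_val_zero, Matrix.cons_val_one, Matrix.head_cons,
        Matrix.cons_val_two, Matrix.tail_cons, Matrix.cons_val_three, fmk0, fmk1, fmk2, fmk3]
      try simp only [hX0B, hSAy]
      try simp only [Bmap, Sum.elim_inl, Matrix.cons_val_zero, Matrix.cons_val_one,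
        Matrix.head_cons, Matrix.cons_val_two, Matrix.tail_cons, Matrix.cons_val_three,
        fmk0, fmk1, fmk2, fmk3]
      try simp only [X0_g2 n x h0]
      try simp only [g2, Sum.elim_inl, Matrix.cons_val_zero, Matrix.cons_val_one,
        Matrix.head_cons, Matrix.cons_val_two, Matrix.tail_cons, Matrix.cons_val_three,
        fmk0, fmk1, fmk2, fmk3]
      simp only [Dmap, dd, Sum.elim_inl]
      ring
  · by_cases hj0 : j.val = 0
    · simp only [f2, Sum.elim_inr, if_pos hj0]
      simp only [hX0B, hSAy]
      simp only [Bmap, Sum.elim_inl, Matrix.cons_val_zero, Matrix.cons_val_one, Matrix.head_cons,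
        Matrix.cons_val_two, Matrix.tail_cons, Matrix.cons_val_three, fmk0, fmk1, fmk2, fmk3]
      simp only [X0_g2 n x h0]
      simp only [g2, Sum.elim_inl, Matrix.cons_val_zero, Matrix.cons_val_one, Matrix.head_cons,
        Matrix.cons_val_two, Matrix.tail_cons, Matrix.cons_val_three, fmk0, fmk1, fmk2, fmk3]
      simp only [Dmap, dd, Sum.elim_inr, if_pos hj0]
      rw [← X0_eq' n x j hj0]
      unfold Nn
      push_cast
      ring
    · simp only [f2, Sum.elim_inr, if_neg hj0]
      simp only [Bmap, Sum.elim_inr, if_neg hj0]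
      simp only [g2, Sum.elim_inr, if_neg hj0]
      simp only [Dmap, dd, Sum.elim_inr, if_neg hj0]
      push_cast
      ring

lemma X0_add (x y : I4 n → ℤ) : X0 n (x + y) = X0 n x + X0 n y := by
  unfold X0; simp [Pi.add_apply, Finset.sum_add_distrib]

lemma S1_add (x y : I4 n → ℤ) : S1 n (x + y) = S1 n x + S1 n y := by
  unfold S1; simp [Pi.add_apply, Finset.sum_add_distrib]

lemma f1_add (x y : I4 n → ℤ) : f1 n (x + y) = f1 n x + f1 n y := by
  funext i
  rcases i with i | j
  · simp [f1]
  · by_cases hj0 : j.val = 0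
    · simp only [f1, Sum.elim_inr, if_pos hj0, Pi.add_apply, X0_add]
    · by_cases hj1 : j.val = 1
      · simp only [f1, Sum.elim_inr, if_neg hj0, if_pos hj1, Pi.add_apply, X0_add, S1_add]
        ring
      · simp only [f1, Sum.elim_inr, if_neg hj0, if_neg hj1, Pi.add_apply, X0_add]
        ring

lemma f2_add (x y : I4 n → ℤ) : f2 n (x + y) = f2 n x + f2 n y := by
  funext i
  rcases i with i | j
  · fin_cases i <;>
    · simp only [f2, Sum.elim_inl, Matrix.cons_val_zero, Matrix.cons_val_one,
        Matrix.head_cons, Matrix.cons_val_two, Matrix.tail_cons, Matrix.cons_val_three,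
        fmk0, fmk1, fmk2, fmk3, Pi.add_apply, X0_add]
      ring
  · by_cases hj0 : j.val = 0
    · simp only [f2, Sum.elim_inr, if_pos hj0, Pi.add_apply, X0_add]
      ring
    · simp only [f2, Sum.elim_inr, if_neg hj0, Pi.add_apply]

lemma Dmap_add (x y : I4 n → ℤ) : Dmap n (x + y) = Dmap n x + Dmap n y := by
  funext i
  simp only [Dmap, Pi.add_apply]
  ring

/-- the combined row operation, as an additive equivalence -/
def Eequiv (hn : 2 ≤ n) : (I4 n → ℤ) ≃+ (I4 n → ℤ) :=
  (AddEquiv.mk' ⟨f1 n, f1i n, f1i_f1 n hn, f1_f1i n hn⟩ (f1_add n)).trans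
    (AddEquiv.mk' ⟨f2 n, f2i n, f2i_f2 n hn, f2_f2i n hn⟩ (f2_add n))

def Dlin : (I4 n → ℤ) →ₗ[ℤ] (I4 n → ℤ) :=
  AddMonoidHom.toIntLinearMap (AddMonoidHom.mk' (Dmap n) (Dmap_add n))

lemma hcomp (hn : 2 ≤ n) (x : I4 n → ℤ) :
    Eequiv n hn ((LnMat n).mulVec (g1 n (g2 n x))) = Dmap n x := by
  show f2 n (f1 n ((LnMat n).mulVec (g1 n (g2 n x)))) = Dmap n x
  rw [key1 n hn (g2 n x), key2 n hn x]

lemma hmap (hn : 2 ≤ n) :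
    Submodule.map ((Eequiv n hn).toIntLinearEquiv : (I4 n → ℤ) →ₗ[ℤ] (I4 n → ℤ))
      (LinearMap.range (LnMat n).mulVecLin) = LinearMap.range (Dlin n) := by
  apply le_antisymm
  · rintro y ⟨z, ⟨v, rfl⟩, rfl⟩
    refine ⟨g2i n (g1i n v), ?_⟩
    show Dmap n (g2i n (g1i n v)) = _
    rw [← hcomp n hn (g2i n (g1i n v)), g2_g2i n hn, g1_g1i n hn]
    rfl
  · rintro y ⟨x, rfl⟩
    refine ⟨(LnMat n).mulVec (g1 n (g2 n x)), ⟨g1 n (g2 n x), rfl⟩, ?_⟩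
    show Eequiv n hn ((LnMat n).mulVec (g1 n (g2 n x))) = Dlin n x
    rw [hcomp n hn x]
    rfl

def phi (hn : 2 ≤ n) : (I4 n → ℤ) →+ ((Fin (n-2) → ZMod (n+4)) × ZMod (Nn n)) :=
  AddMonoidHom.mk'
    (fun x => (fun t => ((x (inr ⟨t.val+1, by have := t.isLt; omega⟩) : ℤ) : ZMod (n+4)),
      ((x (inr ⟨0, by omega⟩) : ℤ) : ZMod (Nn n))))
    (by
      intro x y
      refine Prod.ext ?_ ?_
      · funext t
        push_cast [Pi.add_apply]
        rfl
      · push_cast [Pi.add_apply]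
        rfl)

lemma phi_surj (hn : 2 ≤ n) : Function.Surjective (phi n hn) := by
  rintro ⟨u, v⟩
  choose pu hpu using fun t => ZMod.intCast_surjective (u t)
  choose pv hpv using ZMod.intCast_surjective v
  refine ⟨Sum.elim (fun _ => 0) (fun j => if h : j.val = 0 then pv
    else pu ⟨j.val - 1, by have := j.isLt; omega⟩), ?_⟩
  refine Prod.ext ?_ ?_
  · funext t
    simp only [phi, AddMonoidHom.mk'_apply, Sum.elim_inr]
    rw [dif_neg (by omega)]
    rw [show (⟨(⟨t.val+1, by have := t.isLt; omega⟩ : Fin (n-1)).val - 1,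
      by have := t.isLt; omega⟩ : Fin (n-2)) = t from Fin.ext (by simp)]
    exact hpu t
  · simp only [phi, AddMonoidHom.mk'_apply, Sum.elim_inr]
    simpa using hpv

lemma phi_ker (hn : 2 ≤ n) :
    LinearMap.ker (phi n hn).toIntLinearMap = LinearMap.range (Dlin n) := by
  ext y
  simp only [LinearMap.mem_ker, LinearMap.mem_range, AddMonoidHom.coe_toIntLinearMap]
  constructor
  · intro h
    have h1 : ∀ t : Fin (n-2),
        ((y (inr ⟨t.val+1, by have := t.isLt; omega⟩) : ℤ) : ZMod (n+4)) = 0 := by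
      intro t
      have := congrFun (congrArg Prod.fst h) t
      simpa [phi] using this
    have h2 : ((y (inr ⟨0, by omega⟩) : ℤ) : ZMod (Nn n)) = 0 := by
      have := congrArg Prod.snd h
      simpa [phi] using this
    have hdvd : ∀ i : I4 n, dd n i ∣ y i := by
      rintro (i | j)
      · simp [dd]
      · by_cases hj0 : j.val = 0
        · have hj : j = ⟨0, by omega⟩ := Fin.ext hj0
          rw [hj]
          simp only [dd, Sum.elim_inr, if_pos rfl]
          exact (ZMod.intCast_zmod_eq_zero_iff_dvd _ _).mp h2
        · have ht := h1 ⟨j.val - 1, by have := j.isLt; omega⟩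
          have hj : (⟨(j.val - 1) + 1, by have := j.isLt; omega⟩ : Fin (n-1)) = j :=
            Fin.ext (by simp; omega)
          rw [hj] at ht
          simp only [dd, Sum.elim_inr, if_neg hj0]
          exact (ZMod.intCast_zmod_eq_zero_iff_dvd _ _).mp ht
    refine ⟨fun i => y i / dd n i, funext fun i => ?_⟩
    show dd n i * (y i / dd n i) = y i
    exact Int.mul_ediv_cancel' (hdvd i)
  · rintro ⟨x, rfl⟩
    have hDx : ∀ i, (Dlin n x) i = dd n i * x i := fun i => rfl
    refine Prod.ext ?_ ?_
    · funext t
      simp only [phi, AddMonoidHom.mk'_apply, hDx, Pi.zero_apply, Prod.fst_zero]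
      rw [show dd n (inr (⟨t.val+1, by have := t.isLt; omega⟩ : Fin (n-1)))
        = ((n + 4 : ℕ) : ℤ) from by simp only [dd, Sum.elim_inr]; rw [if_neg (by omega)]]
      rw [ZMod.intCast_zmod_eq_zero_iff_dvd]
      exact dvd_mul_right _ _
    · simp only [phi, AddMonoidHom.mk'_apply, hDx, Prod.snd_zero]
      rw [show dd n (inr (⟨0, by omega⟩ : Fin (n-1))) = ((Nn n : ℕ) : ℤ) from by
        simp [dd]]
      rw [ZMod.intCast_zmod_eq_zero_iff_dvd]
      exact dvd_mul_right _ _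

end Crit4

/-- Example 1. The critical group of the `n`-th iterated cone over the
path graph `P₄`, i.e. the cokernel of its reduced Laplacian, is isomorphic to
`(ℤ/(n+4)ℤ)^{n-2} ⊕ ℤ/((n²+4n+2)(n+4)(n+2))ℤ`. -/
theorem crit_path4_cone_structure
    (n : ℕ) (hn : 2 ≤ n)
    (L : Matrix (Fin 4) (Fin 4) ℤ)
    (hL : L = !![1, -1, 0, 0; -1, 2, -1, 0; 0, -1, 2, -1; 0, 0, -1, 1])
    (Ln : Matrix (Fin 4 ⊕ Fin (n - 1)) (Fin 4 ⊕ Fin (n - 1)) ℤ)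
    (hLn : Ln = Matrix.fromBlocks
      ((n : ℤ) • 1 + L) (-(Matrix.of fun _ _ => 1))
      (-(Matrix.of fun _ _ => 1)) (((n + 4 : ℕ) : ℤ) • 1 - Matrix.of fun _ _ => 1)) :
    Nonempty (
      ((Fin 4 ⊕ Fin (n - 1) → ℤ) ⧸ LinearMap.range Ln.mulVecLin)
        ≃+
      (Fin (n - 2) → ZMod (n + 4)) ×
        ZMod ((n ^ 2 + 4 * n + 2) * (n + 4) * (n + 2))) := by
  subst hL
  subst hLn
  have hMat : Matrix.fromBlocks
      ((n : ℤ) • 1 + !![1, -1, 0, 0; -1, 2, -1, 0; 0, -1, 2, -1; 0, 0, -1, 1])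
      (-(Matrix.of fun _ _ => 1))
      (-(Matrix.of fun _ _ => 1)) (((n + 4 : ℕ) : ℤ) • 1 - Matrix.of fun _ _ => 1)
      = Crit4.LnMat n := rfl
  rw [hMat]
  have E1 : ((Crit4.I4 n → ℤ) ⧸ LinearMap.range (Crit4.LnMat n).mulVecLin)
      ≃ₗ[ℤ] ((Crit4.I4 n → ℤ) ⧸ LinearMap.range (Crit4.Dlin n)) :=
    Submodule.Quotient.equiv _ _ (Crit4.Eequiv n hn).toIntLinearEquiv (Crit4.hmap n hn)
  have E2 : ((Crit4.I4 n → ℤ) ⧸ LinearMap.range (Crit4.Dlin n))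
      ≃ₗ[ℤ] ((Crit4.I4 n → ℤ) ⧸ LinearMap.ker (Crit4.phi n hn).toIntLinearMap) :=
    Submodule.quotEquivOfEq _ _ (Crit4.phi_ker n hn).symm
  have E3 : ((Crit4.I4 n → ℤ) ⧸ LinearMap.ker (Crit4.phi n hn).toIntLinearMap)
      ≃ₗ[ℤ] ((Fin (n-2) → ZMod (n+4)) × ZMod (Crit4.Nn n)) :=
    (Crit4.phi n hn).toIntLinearMap.quotKerEquivOfSurjective (Crit4.phi_surj n hn)
  exact ⟨((E1.trans E2).trans E3).toAddEquiv⟩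
end

section
/- Let L be the 4×4 Laplacian matrix of the path graph P₄ on 4 vertices and let n ≥ 2 be an integer. Let C = (ℤ/(n+4)ℤ)^{n−2} ⊕ ℤ/((n² + 4n + 2)(n + 4)(n + 2))ℤ, which is isomorphic to the critical group of the n-th iterated cone over P₄. Then C has a direct summand isomorphic to (ℤ/(n+4)ℤ)^{n−1} if and only if n is odd. -/
/-- The 2-torsion subtype of a product splits as a product. -/
private def torsionProdEquiv {A B : Type*} [AddCommGroup A] [AddCommGroup B] :
    {x : A × B // x + x = 0} ≃ {a : A // a + a = 0} × {b : B // b + b = 0} :=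
  (Equiv.subtypeEquivRight (fun x => by
      constructor
      · intro h
        exact ⟨congrArg Prod.fst h, congrArg Prod.snd h⟩
      · intro h
        exact Prod.ext h.1 h.2)).trans Equiv.subtypeProdEquivProd

/-- The 2-torsion subtype of a pi type is a pi type of 2-torsion subtypes. -/
private def torsionPiEquiv {ι : Type*} {A : Type*} [AddCommGroup A] :
    {f : ι → A // f + f = 0} ≃ (ι → {a : A // a + a = 0}) :=
  (Equiv.subtypeEquivRight (fun f => by
      simp [funext_iff])).trans Equiv.subtypePiEquivPi

/-- An additive equivalence induces an equivalence of 2-torsion subtypes. -/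
private def torsionCongr {A B : Type*} [AddCommGroup A] [AddCommGroup B] (e : A ≃+ B) :
    {a : A // a + a = 0} ≃ {b : B // b + b = 0} where
  toFun a := ⟨e a.1, by rw [← map_add, a.2, map_zero]⟩
  invFun b := ⟨e.symm b.1, by rw [← map_add, b.2, map_zero]⟩
  left_inv a := Subtype.ext (e.symm_apply_apply a.1)
  right_inv b := Subtype.ext (e.apply_symm_apply b.1)

private theorem torsion_card_zmod_even (m : ℕ) (h2 : 2 ∣ m) (h0 : 0 < m) :
    Nat.card {x : ZMod m // x + x = 0} = 2 := by
  obtain ⟨k, rfl⟩ := h2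
  have hk : 0 < k := by omega
  haveI : NeZero (2 * k) := ⟨by omega⟩
  rw [Nat.card_eq_two_iff]
  have hky : ((k : ZMod (2 * k)) + k) = 0 := by
    have : ((k : ZMod (2 * k)) + k) = ((2 * k : ℕ) : ZMod (2 * k)) := by push_cast; ring
    rw [this, ZMod.natCast_self]
  refine ⟨⟨0, by simp⟩, ⟨(k : ZMod (2 * k)), hky⟩, ?_, ?_⟩
  · intro h
    have h0k : ((k : ℕ) : ZMod (2 * k)) = 0 := by
      have := congrArg Subtype.val h
      exact this.symm
    rw [ZMod.natCast_eq_zero_iff] at h0k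
    have := Nat.le_of_dvd hk h0k
    omega
  · ext z
    simp only [Set.mem_insert_iff, Set.mem_singleton_iff, Set.mem_univ, iff_true]
    obtain ⟨x, hx⟩ := z
    have hval : ((x.val : ℕ) : ZMod (2 * k)) = x :=
      (ZMod.natCast_val x).trans (ZMod.cast_id _ x)
    have h2x : ((2 * x.val : ℕ) : ZMod (2 * k)) = 0 := by
      calc ((2 * x.val : ℕ) : ZMod (2 * k))
          = ((x.val : ℕ) : ZMod (2 * k)) + ((x.val : ℕ) : ZMod (2 * k)) := by
            push_cast; ring
        _ = x + x := by rw [hval]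
        _ = 0 := hx
    rw [ZMod.natCast_eq_zero_iff] at h2x
    have hdvd : k ∣ x.val := by
      obtain ⟨c, hc⟩ := h2x
      refine ⟨c, ?_⟩
      have h' : 2 * x.val = 2 * (k * c) := by rw [hc]; ring
      omega
    have hlt : x.val < 2 * k := ZMod.val_lt x
    obtain ⟨c, hc⟩ := hdvd
    have hc2 : c = 0 ∨ c = 1 := by
      rcases Nat.lt_or_ge c 2 with h | h
      · omega
      · exfalso; nlinarith
    rcases hc2 with rfl | rfl
    · left
      apply Subtype.ext
      simp only
      rw [← hval, hc]
      simp
    · right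
      apply Subtype.ext
      simp only
      rw [← hval, hc]
      simp
  
private theorem torsion_card_ge_two (G : Type) [AddCommGroup G] [Finite G]
    (h : 2 ∣ Nat.card G) : 2 ≤ Nat.card {g : G // g + g = 0} := by
  haveI := Fintype.ofFinite G
  rw [Nat.card_eq_fintype_card] at h
  obtain ⟨g, hg⟩ := exists_prime_addOrderOf_dvd_card 2 h
  have hgne : g ≠ 0 := by
    intro h0
    rw [h0, addOrderOf_zero] at hg
    omega
  have hg2 : g + g = 0 := by
    have := addOrderOf_nsmul_eq_zero g
    rw [hg, two_nsmul] at this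
    exact this
  have : Nontrivial {g : G // g + g = 0} :=
    ⟨⟨⟨0, by simp⟩, ⟨g, hg2⟩, by simp [Subtype.ext_iff, Ne.symm hgne]⟩⟩
  have := Finite.one_lt_card (α := {g : G // g + g = 0})
  omega

/-- Snoc as an additive equivalence. -/
private def snocAddEquiv (k : ℕ) (A : Type) [AddCommGroup A] :
    ((Fin k → A) × A) ≃+ (Fin (k + 1) → A) where
  toFun p := Fin.snoc p.1 p.2
  invFun f := (Fin.init f, f (Fin.last k))
  left_inv p := by simp
  right_inv f := by simp
  map_add' p q := by
    funext i
    refine Fin.lastCases ?_ (fun j => ?_) i <;> simp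

/-- Example 1, splitting. The group
`C = (ℤ/(n+4)ℤ)^{n-2} ⊕ ℤ/((n²+4n+2)(n+4)(n+2))ℤ`, isomorphic to the critical group of the
`n`-th iterated cone over `P₄`, has a direct summand isomorphic to `(ℤ/(n+4)ℤ)^{n-1}` if and
only if `n` is odd. -/
theorem crit_path4_cone_splits_iff_odd
    (n : ℕ) (hn : 2 ≤ n) :
    (∃ (G : Type) (_ : AddCommGroup G),
        Nonempty (
          ((Fin (n - 2) → ZMod (n + 4)) ×
            ZMod ((n ^ 2 + 4 * n + 2) * (n + 4) * (n + 2)))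
          ≃+ ((Fin (n - 1) → ZMod (n + 4)) × G)))
      ↔ Odd n := by
  set P : ℕ := (n ^ 2 + 4 * n + 2) * (n + 4) * (n + 2) with hP
  have hPpos : 0 < P := by positivity
  haveI : NeZero (n + 4) := ⟨by omega⟩
  haveI : NeZero P := ⟨hPpos.ne'⟩
  constructor
  · rintro ⟨G, _, ⟨e⟩⟩
    by_contra hodd
    have hev : 2 ∣ n := (Nat.not_odd_iff_even.mp hodd).two_dvd
    -- G is finite
    haveI : Finite ((Fin (n - 1) → ZMod (n + 4)) × G) := Finite.of_equiv _ e.toEquiv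
    haveI : Finite G := Finite.of_injective
      (fun g => ((0 : Fin (n - 1) → ZMod (n + 4)), g))
      (fun a b h => (Prod.mk.injEq _ _ _ _).mp h |>.2)
    -- cardinality of G
    have hcard : Nat.card ((Fin (n - 2) → ZMod (n + 4)) × ZMod P)
        = Nat.card ((Fin (n - 1) → ZMod (n + 4)) × G) := Nat.card_congr e.toEquiv
    rw [Nat.card_prod, Nat.card_prod, Nat.card_fun, Nat.card_fun, Nat.card_zmod,
      Nat.card_zmod, Nat.card_eq_fintype_card, Fintype.card_fin, Nat.card_eq_fintype_card,
      Fintype.card_fin] at hcard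
    have hpow : (n + 4) ^ (n - 1) = (n + 4) ^ (n - 2) * (n + 4) := by
      rw [← pow_succ]
      congr 1
      omega
    rw [hpow, mul_assoc] at hcard
    have hPG : P = (n + 4) * Nat.card G :=
      Nat.eq_of_mul_eq_mul_left (by positivity) hcard
    have hGcard : Nat.card G = (n ^ 2 + 4 * n + 2) * (n + 2) := by
      have : (n + 4) * Nat.card G = (n + 4) * ((n ^ 2 + 4 * n + 2) * (n + 2)) := by
        rw [← hPG, hP]; ring
      exact Nat.eq_of_mul_eq_mul_left (by omega) this
    have hGeven : 2 ∣ Nat.card G := by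
      rw [hGcard]
      exact Dvd.dvd.mul_left ⟨(n + 2) / 2, by omega⟩ _
    -- torsion counts
    have hTeq : Nat.card {x : (Fin (n - 2) → ZMod (n + 4)) × ZMod P // x + x = 0}
        = Nat.card {x : (Fin (n - 1) → ZMod (n + 4)) × G // x + x = 0} :=
      Nat.card_congr (torsionCongr e)
    have hTz4 : Nat.card {x : ZMod (n + 4) // x + x = 0} = 2 :=
      torsion_card_zmod_even _ ⟨(n + 4) / 2, by omega⟩ (by omega)
    have hTzP : Nat.card {x : ZMod P // x + x = 0} = 2 :=
      torsion_card_zmod_even _ (by rw [hP]; exact Dvd.dvd.mul_left ⟨(n + 2)/2, by omega⟩ _)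
        hPpos
    have hL : Nat.card {x : (Fin (n - 2) → ZMod (n + 4)) × ZMod P // x + x = 0}
        = 2 ^ (n - 2) * 2 := by
      rw [Nat.card_congr torsionProdEquiv, Nat.card_prod,
        Nat.card_congr (torsionPiEquiv (ι := Fin (n - 2))), Nat.card_fun, hTz4, hTzP,
        Nat.card_eq_fintype_card, Fintype.card_fin]
    have hR : Nat.card {x : (Fin (n - 1) → ZMod (n + 4)) × G // x + x = 0}
        = 2 ^ (n - 1) * Nat.card {g : G // g + g = 0} := by
      rw [Nat.card_congr torsionProdEquiv, Nat.card_prod,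
        Nat.card_congr (torsionPiEquiv (ι := Fin (n - 1))), Nat.card_fun, hTz4,
        Nat.card_eq_fintype_card, Fintype.card_fin]
    have hTG : 2 ≤ Nat.card {g : G // g + g = 0} := torsion_card_ge_two G hGeven
    rw [hL, hR] at hTeq
    have h2pow : 2 ^ (n - 2) * 2 = 2 ^ (n - 1) := by
      rw [← pow_succ]
      congr 1
      omega
    rw [h2pow] at hTeq
    have hpos : 0 < 2 ^ (n - 1) := by positivity
    nlinarith
  · intro hodd
    -- coprimality
    have hn4odd : ¬ 2 ∣ (n + 4) := by
      obtain ⟨m, hm⟩ := hodd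
      omega
    have hcop1 : Nat.Coprime (n + 4) (n + 2) := by
      have hd2 : Nat.gcd (n + 4) (n + 2) ∣ 2 := by
        have := Nat.dvd_sub (Nat.gcd_dvd_left (n + 4) (n + 2)) (Nat.gcd_dvd_right (n + 4) (n + 2))
        rwa [show n + 4 - (n + 2) = 2 by omega] at this
      rcases (Nat.prime_two).eq_one_or_self_of_dvd _ hd2 with h | h
      · exact h
      · exact absurd (h ▸ Nat.gcd_dvd_left (n + 4) (n + 2)) hn4odd
    have hcop2 : Nat.Coprime (n + 4) (n ^ 2 + 4 * n + 2) := by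
      have hdl : Nat.gcd (n + 4) (n ^ 2 + 4 * n + 2) ∣ (n + 4) * n :=
        (Nat.gcd_dvd_left _ _).mul_right n
      have hd2 : Nat.gcd (n + 4) (n ^ 2 + 4 * n + 2) ∣ 2 := by
        have := Nat.dvd_sub (Nat.gcd_dvd_right (n + 4) (n ^ 2 + 4 * n + 2)) hdl
        have heq : n ^ 2 + 4 * n + 2 - (n + 4) * n = 2 := by
          rw [show (n + 4) * n = n ^ 2 + 4 * n from by ring]; omega
        rwa [heq] at this
      rcases (Nat.prime_two).eq_one_or_self_of_dvd _ hd2 with h | h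
      · exact h
      · exact absurd (h ▸ Nat.gcd_dvd_left (n + 4) (n ^ 2 + 4 * n + 2)) hn4odd
    have hcop : Nat.Coprime (n + 4) ((n ^ 2 + 4 * n + 2) * (n + 2)) :=
      Nat.Coprime.mul_right hcop2 hcop1
    refine ⟨ZMod ((n ^ 2 + 4 * n + 2) * (n + 2)), inferInstance, ⟨?_⟩⟩
    have e1 : ZMod P ≃+ ZMod (n + 4) × ZMod ((n ^ 2 + 4 * n + 2) * (n + 2)) := by
      rw [show P = (n + 4) * ((n ^ 2 + 4 * n + 2) * (n + 2)) by rw [hP]; ring]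
      exact (ZMod.chineseRemainder hcop).toAddEquiv
    have hk : n - 1 = (n - 2) + 1 := by omega
    refine AddEquiv.trans (AddEquiv.prodCongr (AddEquiv.refl _) e1) ?_
    refine AddEquiv.trans (AddEquiv.prodAssoc).symm ?_
    refine AddEquiv.trans
      (AddEquiv.prodCongr (snocAddEquiv (n - 2) (ZMod (n + 4))) (AddEquiv.refl _)) ?_
    rw [hk]
end
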